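/- arXiv:1505.07745 — 6 statements merged into one kernel-verified Lean document; each statement's English description precedes it below -/
import Mathlib

section
/- Let Eₙ and Fₙ, n ∈ ℕ, be a sequence of pairs of continua in ℂ. If the sequence Δ(Eₙ,Fₙ) is bounded away from 0, i.e. there exists c > 0 with Δ(Eₙ,Fₙ) ≥ c for all n, then the sequence of moduli is bounded: there exists M < ∞ with mod(Eₙ,Fₙ;ℂ) ≤ M for all n. -/
open MeasureTheory Set

noncomputable section

/-- A continuous, piecewise continuously differentiable curve parametrized by `[0,1]`. -/
structure PCurve where
  toFun : ℝ → ℂ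
  continuousOn : ContinuousOn toFun (Set.Icc 0 1)
  exceptional : Finset ℝ
  differentiableAt : ∀ t ∈ Set.Icc (0:ℝ) 1 \ (exceptional : Set ℝ), DifferentiableAt ℝ toFun t
  derivContinuousOn : ContinuousOn (deriv toFun) (Set.Icc (0:ℝ) 1 \ (exceptional : Set ℝ))

/-- The line integral `∫_γ ρ |dz|` of a nonnegative Borel function along a curve. -/
def curveLIntegral (ρ : ℂ → ENNReal) (γ : PCurve) : ENNReal :=
  ∫⁻ t in Set.Ioo (0:ℝ) 1, ρ (γ.toFun t) * ENNReal.ofReal ‖deriv γ.toFun t‖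

/-- `ρ` is admissible for the curve family `Γ`. -/
def IsAdmissible (ρ : ℂ → ENNReal) (Γ : Set PCurve) : Prop :=
  Measurable ρ ∧ ∀ γ ∈ Γ, 1 ≤ curveLIntegral ρ γ

/-- The conformal modulus of a family of curves. -/
def modulus (Γ : Set PCurve) : ENNReal :=
  ⨅ (ρ : ℂ → ENNReal) (_ : IsAdmissible ρ Γ), ∫⁻ z : ℂ, ρ z ^ 2

/-- The family `(E, F; Ω)` of curves with interior in `Ω`, one endpoint in `E` and
the other endpoint in `F`. -/
def connecting (E F Ω : Set ℂ) : Set PCurve :=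
  {γ | (∀ t ∈ Set.Ioo (0:ℝ) 1, γ.toFun t ∈ Ω) ∧
    ((γ.toFun 0 ∈ E ∧ γ.toFun 1 ∈ F) ∨ (γ.toFun 0 ∈ F ∧ γ.toFun 1 ∈ E))}

/-- A continuum: a compact connected set with more than one point. -/
def IsContinuum (E : Set ℂ) : Prop :=
  IsCompact E ∧ IsConnected E ∧ E.Nontrivial

/-- The distance between two sets. -/
def setDist (E F : Set ℂ) : ℝ :=
  sInf (Set.image2 dist E F)

/-- The relative distance `Δ(E,F) = dist(E,F) / min(diam E, diam F)`. -/
def relDist (E F : Set ℂ) : ℝ :=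
  setDist E F / min (Metric.diam E) (Metric.diam F)

/-!
Let `δ = min (diam E) (diam F)`, `d = dist (E, F) ≥ c δ`, and `x` a point of the set of smaller
diameter. Every curve joining `E` to `F` has a subarc of length at least `d` inside the disc
`B(x, δ + d)`, so `ρ = d⁻¹ 𝟙_B` is admissible and `mod (E, F; ℂ) ≤ π (δ + d)² / d² ≤ π (1/c + 1)²`.
-/

theorem ContinuousOn.exists_first_ge {g : ℝ → ℝ} {a b R : ℝ} (hg : ContinuousOn g (Icc a b))
    (hab : a ≤ b) (hR : R ≤ g b) : ∃ T ∈ Icc a b, R ≤ g T ∧ ∀ t ∈ Ico a T, g t < R := by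
  set S := Icc a b ∩ g ⁻¹' Ici R
  have hS : IsClosed S := hg.preimage_isClosed_of_isClosed isClosed_Icc isClosed_Ici
  have hT : sInf S ∈ S := hS.csInf_mem ⟨b, ⟨hab, le_rfl⟩, hR⟩ ⟨a, fun t ht => ht.1.1⟩
  refine ⟨sInf S, hT.1, hT.2, fun t ht => not_le.1 fun hRt => ?_⟩
  have htS : t ∈ S := ⟨⟨ht.1, ht.2.le.trans hT.1.2⟩, hRt⟩
  exact ht.2.not_ge (csInf_le ⟨a, fun s hs => hs.1.1⟩ htS)

theorem ContinuousOn.exists_last_ge {g : ℝ → ℝ} {a b R : ℝ} (hg : ContinuousOn g (Icc a b))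
    (hab : a ≤ b) (hR : R ≤ g a) : ∃ T ∈ Icc a b, R ≤ g T ∧ ∀ t ∈ Ioc T b, g t < R := by
  set S := Icc a b ∩ g ⁻¹' Ici R
  have hS : IsClosed S := hg.preimage_isClosed_of_isClosed isClosed_Icc isClosed_Ici
  have hT : sSup S ∈ S := hS.csSup_mem ⟨a, ⟨le_rfl, hab⟩, hR⟩ ⟨b, fun t ht => ht.1.2⟩
  refine ⟨sSup S, hT.1, hT.2, fun t ht => not_le.1 fun hRt => ?_⟩
  have htS : t ∈ S := ⟨⟨hT.1.1.trans ht.1.le, ht.2⟩, hRt⟩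
  exact ht.1.not_ge (le_csSup ⟨b, fun s hs => hs.1.2⟩ htS)

namespace PCurve

variable (γ : PCurve)

theorem ofReal_dist_le_lintegral_norm_deriv {a b : ℝ} (ha : 0 ≤ a) (hab : a ≤ b) (hb : b ≤ 1) :
    ENNReal.ofReal (dist (γ.toFun b) (γ.toFun a)) ≤
      ∫⁻ t in Ioo a b, ENNReal.ofReal ‖deriv γ.toFun t‖ := by
  by_cases hfin : ∫⁻ t in Ioo a b, ENNReal.ofReal ‖deriv γ.toFun t‖ = ⊤
  · exact hfin ▸ le_top
  have hsub : Icc a b ⊆ Icc 0 1 := Icc_subset_Icc ha hb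
  have hint : IntegrableOn (deriv γ.toFun) (Ioc a b) := by
    refine IntegrableOn.congr_set_ae ⟨(measurable_deriv _).aestronglyMeasurable.restrict, ?_⟩
      Ioo_ae_eq_Ioc.symm
    simpa only [HasFiniteIntegral, ← ofReal_norm] using lt_top_iff_ne_top.2 hfin
  have hftc : ∫ t in a..b, deriv γ.toFun t = γ.toFun b - γ.toFun a := by
    refine integral_eq_of_hasDerivAt_off_countable γ.toFun (deriv γ.toFun)
      γ.exceptional.countable_toSet (γ.continuousOn.mono (uIcc_of_le hab ▸ hsub)) ?_
      ((intervalIntegrable_iff_integrableOn_Ioc_of_le hab).2 hint)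
    intro t ht
    rw [min_eq_left hab, max_eq_right hab] at ht
    exact (γ.differentiableAt t ⟨hsub (Ioo_subset_Icc_self ht.1), ht.2⟩).hasDerivAt
  calc ENNReal.ofReal (dist (γ.toFun b) (γ.toFun a))
      ≤ ENNReal.ofReal (∫ t in a..b, ‖deriv γ.toFun t‖) := by
        rw [dist_eq_norm, ← hftc]
        exact ENNReal.ofReal_le_ofReal (intervalIntegral.norm_integral_le_integral_norm hab)
    _ = ∫⁻ t in Ioo a b, ENNReal.ofReal ‖deriv γ.toFun t‖ := by
        rw [intervalIntegral.integral_of_le hab,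
          ofReal_integral_eq_lintegral_ofReal hint.norm (.of_forall fun _ => norm_nonneg _),
          setLIntegral_congr Ioo_ae_eq_Ioc]

theorem one_le_curveLIntegral_indicator {B : Set ℂ} {d u v : ℝ} (hd : 0 < d) (hu : 0 ≤ u)
    (huv : u ≤ v) (hv : v ≤ 1) (hB : ∀ t ∈ Ioo u v, γ.toFun t ∈ B)
    (hdist : d ≤ dist (γ.toFun v) (γ.toFun u)) :
    1 ≤ curveLIntegral (B.indicator fun _ => ENNReal.ofReal d⁻¹) γ := by
  calc (1 : ENNReal) = ENNReal.ofReal d⁻¹ * ENNReal.ofReal d := by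
        rw [← ENNReal.ofReal_mul (by positivity), inv_mul_cancel₀ hd.ne', ENNReal.ofReal_one]
    _ ≤ ENNReal.ofReal d⁻¹ * ∫⁻ t in Ioo u v, ENNReal.ofReal ‖deriv γ.toFun t‖ := by
        gcongr
        exact (ENNReal.ofReal_le_ofReal hdist).trans
          (γ.ofReal_dist_le_lintegral_norm_deriv hu huv hv)
    _ = ∫⁻ t in Ioo u v, B.indicator (fun _ => ENNReal.ofReal d⁻¹) (γ.toFun t) *
          ENNReal.ofReal ‖deriv γ.toFun t‖ := by
        rw [← lintegral_const_mul _ (measurable_deriv _).norm.ennreal_ofReal]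
        refine setLIntegral_congr_fun measurableSet_Ioo fun t ht => ?_
        rw [indicator_of_mem (hB t ht)]
    _ ≤ curveLIntegral (B.indicator fun _ => ENNReal.ofReal d⁻¹) γ :=
        lintegral_mono_set (Ioo_subset_Ioo hu hv)

/-- Follow the curve from the endpoint near `x` until it first gets `d` away from that endpoint:
this subarc stays in the ball and has length at least `d`. -/
theorem one_le_curveLIntegral_closedBall_indicator {x : ℂ} {δ d : ℝ} (hd : 0 < d)
    (hlen : d ≤ dist (γ.toFun 0) (γ.toFun 1))
    (hx : dist (γ.toFun 0) x ≤ δ ∨ dist (γ.toFun 1) x ≤ δ) :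
    1 ≤ curveLIntegral ((Metric.closedBall x (δ + d)).indicator fun _ => ENNReal.ofReal d⁻¹) γ := by
  have hball {p z : ℂ} (hp : dist p x ≤ δ) (hz : dist z p < d) :
      z ∈ Metric.closedBall x (δ + d) := by
    rw [Metric.mem_closedBall]
    linarith [dist_triangle z p x]
  have hcont (p : ℂ) : ContinuousOn (fun t => dist (γ.toFun t) p) (Icc 0 1) :=
    fun t ht => (γ.continuousOn t ht).dist continuousWithinAt_const
  rcases hx with h0 | h1
  · obtain ⟨T, hT, hdT, hlt⟩ :=
      (hcont (γ.toFun 0)).exists_first_ge (R := d) zero_le_one (by rwa [dist_comm] at hlen)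
    exact γ.one_le_curveLIntegral_indicator hd le_rfl hT.1 hT.2
      (fun t ht => hball h0 (hlt t (Ioo_subset_Ico_self ht))) hdT
  · obtain ⟨T, hT, hdT, hlt⟩ := (hcont (γ.toFun 1)).exists_last_ge (R := d) zero_le_one hlen
    exact γ.one_le_curveLIntegral_indicator hd hT.1 hT.2 le_rfl
      (fun t ht => hball h1 (hlt t (Ioo_subset_Ioc_self ht))) (by rwa [dist_comm])

end PCurve

theorem connecting_comm (E F Ω : Set ℂ) : connecting E F Ω = connecting F E Ω := by
  ext γ
  simp only [connecting, mem_ofPred_eq, or_comm]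

theorem setDist_comm (E F : Set ℂ) : setDist E F = setDist F E := by
  simp only [setDist, image2_swap dist E F, dist_comm]

theorem relDist_comm (E F : Set ℂ) : relDist E F = relDist F E := by
  rw [relDist, relDist, setDist_comm, min_comm]

theorem setDist_nonneg (E F : Set ℂ) : 0 ≤ setDist E F :=
  Real.sInf_nonneg (forall_mem_image2.2 fun _ _ _ _ => dist_nonneg)

theorem setDist_le_dist {E F : Set ℂ} {p q : ℂ} (hp : p ∈ E) (hq : q ∈ F) :
    setDist E F ≤ dist p q :=
  csInf_le ⟨0, forall_mem_image2.2 fun _ _ _ _ => dist_nonneg⟩ (mem_image2_of_mem hp hq)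

theorem modulus_le_lintegral_sq {ρ : ℂ → ENNReal} {Γ : Set PCurve} (hρ : IsAdmissible ρ Γ) :
    modulus Γ ≤ ∫⁻ z, ρ z ^ 2 :=
  iInf₂_le ρ hρ

theorem lintegral_indicator_closedBall_sq (x : ℂ) (r : ℝ) (a : ENNReal) :
    ∫⁻ z, (Metric.closedBall x r).indicator (fun _ => a) z ^ 2 =
      a ^ 2 * ENNReal.ofReal r ^ 2 * NNReal.pi := by
  have hsq : (fun z => (Metric.closedBall x r).indicator (fun _ => a) z ^ 2) =
      (Metric.closedBall x r).indicator fun _ => a ^ 2 :=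
    (indicator_comp_of_zero (g := fun y : ENNReal => y ^ 2) (by simp)).symm
  rw [hsq, lintegral_indicator_const measurableSet_closedBall, Complex.volume_closedBall, mul_assoc]

theorem modulus_connecting_le {E F : Set ℂ} (Ω : Set ℂ) {x : ℂ} (hx : x ∈ E)
    (hE : Bornology.IsBounded E) {d : ℝ} (hd : 0 < d) (hEF : ∀ p ∈ E, ∀ q ∈ F, d ≤ dist p q) :
    modulus (connecting E F Ω) ≤ ENNReal.ofReal ((Metric.diam E / d + 1) ^ 2 * Real.pi) := by
  have hadm : IsAdmissible ((Metric.closedBall x (Metric.diam E + d)).indicator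
      fun _ => ENNReal.ofReal d⁻¹) (connecting E F Ω) := by
    refine ⟨measurable_const.indicator measurableSet_closedBall, ?_⟩
    rintro γ ⟨-, ⟨h0, h1⟩ | ⟨h0, h1⟩⟩
    · exact γ.one_le_curveLIntegral_closedBall_indicator hd (hEF _ h0 _ h1)
        (.inl (Metric.dist_le_diam_of_mem hE h0 hx))
    · exact γ.one_le_curveLIntegral_closedBall_indicator hd (dist_comm (γ.toFun 0) _ ▸ hEF _ h1 _ h0)
        (.inr (Metric.dist_le_diam_of_mem hE h1 hx))
  refine (modulus_le_lintegral_sq hadm).trans_eq ?_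
  rw [lintegral_indicator_closedBall_sq, ← ENNReal.ofReal_coe_nnreal, NNReal.coe_real_pi,
    ← ENNReal.ofReal_pow (by positivity), ← ENNReal.ofReal_pow (by positivity),
    ← ENNReal.ofReal_mul (by positivity), ← ENNReal.ofReal_mul (by positivity)]
  congr 1
  field_simp

theorem modulus_connecting_le_of_le_relDist_of_diam_le {E F : Set ℂ} (Ω : Set ℂ) {c : ℝ}
    (hc : 0 < c) (hrel : c ≤ relDist E F) (hdiam : Metric.diam E ≤ Metric.diam F) :
    modulus (connecting E F Ω) ≤ ENNReal.ofReal ((1 / c + 1) ^ 2 * Real.pi) := by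
  rw [relDist, min_eq_left hdiam] at hrel
  obtain ⟨hd, hdiamE⟩ : 0 < setDist E F ∧ 0 < Metric.diam E :=
    (div_pos_iff.1 (hc.trans_le hrel)).resolve_right
      fun h => (Metric.diam_nonneg).not_gt h.2
  have hE : Bornology.IsBounded E := by
    by_contra h
    exact hdiamE.ne' (Metric.diam_eq_zero_of_unbounded h)
  obtain ⟨x, hx⟩ : E.Nonempty := nonempty_iff_ne_empty.2 fun h => by simp [h] at hdiamE
  refine (modulus_connecting_le Ω hx hE hd fun p hp q hq => setDist_le_dist hp hq).trans ?_
  gcongr ENNReal.ofReal ((?_ + 1) ^ 2 * _)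
  rw [div_le_div_iff₀ hd hc]
  rw [le_div_iff₀ hdiamE] at hrel
  linarith

theorem modulus_connecting_le_of_le_relDist {E F : Set ℂ} (Ω : Set ℂ) {c : ℝ} (hc : 0 < c)
    (hrel : c ≤ relDist E F) :
    modulus (connecting E F Ω) ≤ ENNReal.ofReal ((1 / c + 1) ^ 2 * Real.pi) := by
  rcases le_total (Metric.diam E) (Metric.diam F) with h | h
  · exact modulus_connecting_le_of_le_relDist_of_diam_le Ω hc hrel h
  · rw [connecting_comm]
    exact modulus_connecting_le_of_le_relDist_of_diam_le Ω hc (relDist_comm E F ▸ hrel) h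

theorem modulus_bounded_of_relDist_bounded_below_general (E F : ℕ → Set ℂ)
    (c : ℝ) (hc : 0 < c) (hrel : ∀ n, c ≤ relDist (E n) (F n)) :
    ∃ M : ℝ, ∀ n, modulus (connecting (E n) (F n) Set.univ) ≤ ENNReal.ofReal M :=
  ⟨_, fun n => modulus_connecting_le_of_le_relDist univ hc (hrel n)⟩

/-- Corollary: if `Δ(Eₙ,Fₙ)` is bounded away from `0`, then `mod(Eₙ,Fₙ;ℂ)` is bounded. -/
theorem modulus_bounded_of_relDist_bounded_below (E F : ℕ → Set ℂ)
    (hE : ∀ n, IsContinuum (E n)) (hF : ∀ n, IsContinuum (F n))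
    (c : ℝ) (hc : 0 < c) (hrel : ∀ n, c ≤ relDist (E n) (F n)) :
    ∃ M : ℝ, ∀ n, modulus (connecting (E n) (F n) Set.univ) ≤ ENNReal.ofReal M :=
  modulus_bounded_of_relDist_bounded_below_general E F c hc hrel

end
end

section
/- In the horizontal strip S: if I ⊂ ∂S contains a neighborhood of the left end, i.e. I ⊇ {x ∈ ℝ : x < a} ∪ {x + i : x < b} for some a, b ∈ ℝ, and J ⊂ ∂S contains a neighborhood of the right end, i.e. J ⊇ {x ∈ ℝ : x > c} ∪ {x + i : x > d} for some c, d ∈ ℝ, then mod Γᵋ_{I,J} → ∞ as ε → 0⁺. -/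
open MeasureTheory Set

noncomputable section

/-- The horizontal strip `S = {z : 0 < Im z < 1}`. -/
def stripS : Set ℂ := {z | 0 < z.im ∧ z.im < 1}

/-- The boundary `∂S = ℝ ∪ (ℝ + i)` of the strip. -/
def stripBdry : Set ℂ := {z | z.im = 0 ∨ z.im = 1}

/-- The horizontal shrinking map `H_ε(x + iy) = εx + iy`. -/
def Heps (ε : ℝ) (z : ℂ) : ℂ := ⟨ε * z.re, z.im⟩

/-- The left-end piece `{x ∈ ℝ : x < a} ∪ {x + i : x < b}` of `∂S`. -/
def leftEnd (a b : ℝ) : Set ℂ :=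
  {z : ℂ | z.im = 0 ∧ z.re < a} ∪ {z : ℂ | z.im = 1 ∧ z.re < b}

/-- The right-end piece `{x ∈ ℝ : a < x} ∪ {x + i : b < x}` of `∂S`. -/
def rightEnd (a b : ℝ) : Set ℂ :=
  {z : ℂ | z.im = 0 ∧ a < z.re} ∪ {z : ℂ | z.im = 1 ∧ b < z.re}

/-- `Γᵋ_{I,J} = (H_ε(I), H_ε(J); S)`. -/
def stripFam (ε : ℝ) (I J : Set ℂ) : Set PCurve :=
  connecting (Heps ε '' I) (Heps ε '' J) stripS

/-!
Put `K = |a| + |c| + 1`. For small `ε` the half circles `r e^{iπt}`, `t ∈ [0, 1]`, with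
`ε K < r < 1` lie in `S` and join `H_ε(J) ∋ r` to `H_ε(I) ∋ -r`. If `ρ` is admissible, then
`1 ≤ r ∫₀^π ρ(r e^{iθ}) dθ`, so by Cauchy–Schwarz `1 / (π r) ≤ r ∫₀^π ρ(r e^{iθ})² dθ`.
Integrating over `r ∈ (εK, 1)` and reading the result in polar coordinates gives
`∬ ρ² ≥ log (1 / (εK)) / π`, which tends to `∞` as `ε → 0⁺`.
-/

open Real Filter Topology

theorem Complex.continuous_polarCoord_symm : Continuous Complex.polarCoord.symm :=
  Complex.equivRealProdCLM.symm.continuous.comp _root_.continuous_polarCoord_symm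

theorem lintegral_sq_le_measure_univ_mul_lintegral_sq {α : Type*} [MeasurableSpace α]
    (μ : Measure α) {f : α → ENNReal} (hf : AEMeasurable f μ) :
    (∫⁻ x, f x ∂μ) ^ 2 ≤ μ univ * ∫⁻ x, f x ^ 2 ∂μ := by
  have h := ENNReal.lintegral_mul_le_Lp_mul_Lq μ Real.HolderConjugate.two_two hf
    (aemeasurable_const (b := (1 : ENNReal)))
  simp only [Pi.mul_apply, mul_one, ENNReal.one_rpow, lintegral_const, one_mul] at h
  calc (∫⁻ x, f x ∂μ) ^ 2
      ≤ ((∫⁻ x, f x ^ (2 : ℝ) ∂μ) ^ (1 / 2 : ℝ) * μ univ ^ (1 / 2 : ℝ)) ^ 2 :=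
        pow_le_pow_left' h 2
    _ = μ univ * ∫⁻ x, f x ^ 2 ∂μ := by
        rw [mul_pow, ← ENNReal.rpow_natCast, ← ENNReal.rpow_natCast (μ univ ^ _),
          ← ENNReal.rpow_mul, ← ENNReal.rpow_mul]
        norm_num [mul_comm]

theorem lintegral_Ioo_ofReal_inv {a b : ℝ} (ha : 0 < a) (hab : a ≤ b) :
    ∫⁻ r in Ioo a b, ENNReal.ofReal r⁻¹ = ENNReal.ofReal (Real.log (b / a)) := by
  have hpos : ∀ r ∈ Icc a b, 0 < r := fun r hr => ha.trans_le hr.1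
  have hint : IntegrableOn (fun r : ℝ => r⁻¹) (Ioo a b) :=
    ((continuousOn_inv₀.mono fun r hr => (hpos r hr).ne').integrableOn_Icc).mono_set
      Ioo_subset_Icc_self
  rw [← ofReal_integral_eq_lintegral_ofReal hint
      ((ae_restrict_iff' measurableSet_Ioo).2 (ae_of_all _ fun r hr =>
        (inv_pos.2 (hpos r (Ioo_subset_Icc_self hr))).le)),
    ← integral_Ioc_eq_integral_Ioo, ← intervalIntegral.integral_of_le hab,
    integral_inv_of_pos ha (ha.trans_le hab)]

theorem hasDerivAt_ofReal_mul_exp_mul_I (r c t : ℝ) :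
    HasDerivAt (fun t : ℝ => (r : ℂ) * Complex.exp ((c * t : ℝ) * Complex.I))
      ((r : ℂ) * (Complex.exp ((c * t : ℝ) * Complex.I) * (c * Complex.I))) t := by
  have hlin : HasDerivAt (fun t : ℝ => ((c * t : ℝ) : ℂ)) (c : ℂ) t := by
    simpa using ((hasDerivAt_id t).const_mul c).ofReal_comp
  exact ((hlin.mul_const Complex.I).cexp).const_mul (r : ℂ)

def semicircle (r : ℝ) : PCurve where
  toFun t := r * Complex.exp ((π * t : ℝ) * Complex.I)
  continuousOn := by fun_prop
  exceptional := ∅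
  differentiableAt t _ := (hasDerivAt_ofReal_mul_exp_mul_I r π t).differentiableAt
  derivContinuousOn := by
    rw [funext fun t => (hasDerivAt_ofReal_mul_exp_mul_I r π t).deriv]
    fun_prop

theorem semicircle_apply (r t : ℝ) :
    (semicircle r).toFun t = Complex.polarCoord.symm (r, π * t) := by
  simp only [semicircle, Complex.polarCoord_symm_apply, Complex.exp_mul_I]
  push_cast
  ring

theorem norm_deriv_semicircle (r t : ℝ) : ‖deriv (semicircle r).toFun t‖ = |r| * π := by
  simp only [semicircle, (hasDerivAt_ofReal_mul_exp_mul_I r π t).deriv]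
  simp only [norm_mul, Complex.norm_exp_ofReal_mul_I, Complex.norm_real, Complex.norm_I,
    Real.norm_eq_abs, abs_of_pos pi_pos]
  ring

theorem semicircle_zero (r : ℝ) : (semicircle r).toFun 0 = r := by simp [semicircle]

theorem semicircle_one (r : ℝ) : (semicircle r).toFun 1 = -r := by
  simp [semicircle, Complex.exp_pi_mul_I]

theorem semicircle_mem_stripS {r t : ℝ} (hr0 : 0 < r) (hr1 : r < 1) (ht : t ∈ Ioo 0 1) :
    (semicircle r).toFun t ∈ stripS := by
  have hsin : 0 < Real.sin (π * t) :=
    sin_pos_of_pos_of_lt_pi (by nlinarith [pi_pos, ht.1]) (by nlinarith [pi_pos, ht.2])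
  have him : ((semicircle r).toFun t).im = r * Real.sin (π * t) := by
    simp [semicircle_apply, -Complex.ofReal_cos, -Complex.ofReal_sin]
  rw [stripS, mem_ofPred_eq, him]
  exact ⟨by positivity, by nlinarith [sin_le_one (π * t)]⟩

theorem curveLIntegral_semicircle (ρ : ℂ → ENNReal) (r : ℝ) :
    curveLIntegral ρ (semicircle r) =
      ENNReal.ofReal |r| * ∫⁻ θ in Ioo 0 π, ρ (Complex.polarCoord.symm (r, θ)) := by
  have hsubst := lintegral_image_eq_lintegral_abs_deriv_mul measurableSet_Ioo
    (fun t _ => ((hasDerivAt_id t).const_mul π).hasDerivWithinAt)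
    ((mul_right_injective₀ pi_ne_zero).injOn (s := Ioo 0 1))
    (fun θ => ρ (Complex.polarCoord.symm (r, θ)))
  simp only [id, mul_one, mul_zero, image_mul_left_Ioo pi_pos, abs_of_pos pi_pos] at hsubst
  rw [hsubst, ← lintegral_const_mul' _ _ ENNReal.ofReal_ne_top, curveLIntegral]
  refine setLIntegral_congr_fun measurableSet_Ioo fun t _ => ?_
  rw [norm_deriv_semicircle, semicircle_apply, ENNReal.ofReal_mul (abs_nonneg r)]
  ring

theorem Heps_ofReal_div {ε : ℝ} (hε : ε ≠ 0) (x : ℝ) : Heps ε ((x / ε : ℝ) : ℂ) = x := by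
  simp [Heps, Complex.ext_iff, mul_div_cancel₀ x hε]

theorem semicircle_mem_stripFam {I J : Set ℂ} {a b c d ε r : ℝ} (hI : leftEnd a b ⊆ I)
    (hJ : rightEnd c d ⊆ J) (hε : 0 < ε) (hr0 : 0 < r) (hr1 : r < 1) (ha : -r < a * ε)
    (hc : c * ε < r) : semicircle r ∈ stripFam ε I J := by
  refine ⟨fun t ht => semicircle_mem_stripS hr0 hr1 ht, Or.inr ⟨?_, ?_⟩⟩
  · refine ⟨((r / ε : ℝ) : ℂ), hJ (Or.inl ⟨by simp, ?_⟩), ?_⟩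
    · simpa using (lt_div_iff₀ hε).2 hc
    · rw [Heps_ofReal_div hε.ne', semicircle_zero]
  · refine ⟨((-r / ε : ℝ) : ℂ), hI (Or.inl ⟨by simp, ?_⟩), ?_⟩
    · simpa using (div_lt_iff₀ hε).2 ha
    · rw [Heps_ofReal_div hε.ne', semicircle_one, Complex.ofReal_neg]

theorem setLIntegral_polarCoord_le_lintegral {f : ℂ → ENNReal} (hf : Measurable f) {R Θ : Set ℝ}
    (hR : R ⊆ Ioi 0) (hΘ : Θ ⊆ Ioo (-π) π) :
    ∫⁻ r in R, ENNReal.ofReal r * ∫⁻ θ in Θ, f (Complex.polarCoord.symm (r, θ)) ≤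
      ∫⁻ z, f z := by
  have hmeas : Measurable fun p : ℝ × ℝ => ENNReal.ofReal p.1 * f (Complex.polarCoord.symm p) :=
    measurable_fst.ennreal_ofReal.mul (hf.comp Complex.continuous_polarCoord_symm.measurable)
  calc ∫⁻ r in R, ENNReal.ofReal r * ∫⁻ θ in Θ, f (Complex.polarCoord.symm (r, θ))
      = ∫⁻ p in R ×ˢ Θ, ENNReal.ofReal p.1 * f (Complex.polarCoord.symm p) := by
        rw [Measure.volume_eq_prod, ← Measure.prod_restrict, lintegral_prod _ hmeas.aemeasurable]
        simp_rw [lintegral_const_mul' _ _ ENNReal.ofReal_ne_top]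
    _ ≤ ∫⁻ p in Complex.polarCoord.target,
          ENNReal.ofReal p.1 * f (Complex.polarCoord.symm p) :=
        lintegral_mono_set (prod_mono hR hΘ)
    _ = ∫⁻ z, f z := Complex.lintegral_comp_polarCoord_symm f

theorem ofReal_inv_le_mul_lintegral_sq_of_one_le_curveLIntegral {ρ : ℂ → ENNReal}
    (hρ : Measurable ρ) {r : ℝ} (hr : 0 < r) (h : 1 ≤ curveLIntegral ρ (semicircle r)) :
    ENNReal.ofReal (π * r)⁻¹ ≤
      ENNReal.ofReal r * ∫⁻ θ in Ioo 0 π, ρ (Complex.polarCoord.symm (r, θ)) ^ 2 := by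
  set A := ∫⁻ θ in Ioo 0 π, ρ (Complex.polarCoord.symm (r, θ))
  set B := ∫⁻ θ in Ioo 0 π, ρ (Complex.polarCoord.symm (r, θ)) ^ 2
  have hcont : Continuous fun θ : ℝ => Complex.polarCoord.symm (r, θ) :=
    Complex.continuous_polarCoord_symm.comp (Continuous.prodMk_right r)
  have hCS : A ^ 2 ≤ ENNReal.ofReal π * B := by
    simpa only [Measure.restrict_apply_univ, Real.volume_Ioo, sub_zero, Function.comp_apply]
      using lintegral_sq_le_measure_univ_mul_lintegral_sq
      (volume.restrict (Ioo 0 π)) (hρ.comp hcont.measurable).aemeasurable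
  rw [curveLIntegral_semicircle, abs_of_pos hr] at h
  have hprod : 1 ≤ ENNReal.ofReal (π * r) * (ENNReal.ofReal r * B) :=
    calc 1 ≤ (ENNReal.ofReal r * A) ^ 2 := one_le_pow₀ h
      _ = ENNReal.ofReal r ^ 2 * A ^ 2 := mul_pow _ _ _
      _ ≤ ENNReal.ofReal r ^ 2 * (ENNReal.ofReal π * B) := by gcongr
      _ = ENNReal.ofReal (π * r) * (ENNReal.ofReal r * B) := by
        rw [ENNReal.ofReal_mul pi_pos.le]
        ring
  rwa [ENNReal.ofReal_inv_of_pos (by positivity),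
    ENNReal.inv_le_iff_le_mul (fun _ => by positivity) (fun h => absurd h ENNReal.ofReal_ne_top)]

theorem ofReal_log_inv_div_pi_le_lintegral_sq {ρ : ℂ → ENNReal} (hρ : Measurable ρ) {s : ℝ}
    (hs0 : 0 < s) (hs1 : s < 1) (h : ∀ r ∈ Ioo s 1, 1 ≤ curveLIntegral ρ (semicircle r)) :
    ENNReal.ofReal (Real.log s⁻¹ / π) ≤ ∫⁻ z, ρ z ^ 2 :=
  calc ENNReal.ofReal (Real.log s⁻¹ / π)
      = ∫⁻ r in Ioo s 1, ENNReal.ofReal (π * r)⁻¹ := by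
        simp_rw [mul_inv, ENNReal.ofReal_mul (inv_nonneg.2 pi_pos.le)]
        rw [lintegral_const_mul' _ _ ENNReal.ofReal_ne_top, lintegral_Ioo_ofReal_inv hs0 hs1.le,
          ← ENNReal.ofReal_mul (inv_nonneg.2 pi_pos.le), one_div, inv_mul_eq_div]
    _ ≤ ∫⁻ r in Ioo s 1,
          ENNReal.ofReal r * ∫⁻ θ in Ioo 0 π, ρ (Complex.polarCoord.symm (r, θ)) ^ 2 :=
        setLIntegral_mono' measurableSet_Ioo fun r hr =>
          ofReal_inv_le_mul_lintegral_sq_of_one_le_curveLIntegral hρ (hs0.trans hr.1) (h r hr)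
    _ ≤ ∫⁻ z, ρ z ^ 2 :=
        setLIntegral_polarCoord_le_lintegral (hρ.pow_const 2)
          (fun r hr => hs0.trans hr.1) (Ioo_subset_Ioo_left (by linarith [pi_pos]))

theorem tendsto_ofReal_log_inv_div_pi_nhdsGT_zero {K : ℝ} (hK : 0 < K) :
    Tendsto (fun ε : ℝ => ENNReal.ofReal (Real.log (ε * K)⁻¹ / π)) (𝓝[>] 0) (𝓝 ⊤) := by
  have hscale : Tendsto (fun ε : ℝ => ε * K) (𝓝[>] 0) (𝓝[>] 0) := by
    refine tendsto_nhdsWithin_iff.2 ⟨?_, eventually_nhdsWithin_of_forall fun ε hε => mul_pos hε hK⟩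
    exact ((continuous_mul_const K).tendsto' 0 0 (zero_mul K)).mono_left nhdsWithin_le_nhds
  simp_rw [Real.log_inv]
  exact ENNReal.tendsto_ofReal_atTop.comp <|
    ((tendsto_neg_atBot_atTop.comp (tendsto_log_nhdsGT_zero.comp hscale)).atTop_div_const pi_pos)

theorem strip_modulus_tendsto_top_general (I J : Set ℂ)
    (a b c d : ℝ) (hI : leftEnd a b ⊆ I) (hJ : rightEnd c d ⊆ J) :
    Filter.Tendsto (fun ε : ℝ => modulus (stripFam ε I J))
      (nhdsWithin 0 (Set.Ioi 0)) (nhds ⊤) := by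
  set K := |a| + |c| + 1
  have hK : 0 < K := by positivity
  have hbound : ∀ ε ∈ Ioo 0 K⁻¹,
      ENNReal.ofReal (Real.log (ε * K)⁻¹ / π) ≤ modulus (stripFam ε I J) := by
    rintro ε ⟨hε0, hεK⟩
    have hs0 : 0 < ε * K := by positivity
    have hs1 : ε * K < 1 := (lt_inv_mul_iff₀' hK).1 (by rwa [mul_one])
    refine le_iInf₂ fun ρ hρ => ofReal_log_inv_div_pi_le_lintegral_sq hρ.1 hs0 hs1 fun r hr =>
      hρ.2 _ (semicircle_mem_stripFam hI hJ hε0 (hs0.trans hr.1) hr.2 ?_ ?_)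
    · nlinarith [neg_abs_le a, abs_nonneg c, hr.1]
    · nlinarith [le_abs_self c, abs_nonneg a, hr.1]
  exact tendsto_nhds_top_mono (tendsto_ofReal_log_inv_div_pi_nhdsGT_zero hK)
    (mem_of_superset (Ioo_mem_nhdsGT (inv_pos.2 hK)) hbound)

/-- If `I` contains a neighborhood of the left end of `∂S` and `J` contains a neighborhood
of the right end, then `mod Γᵋ_{I,J} → ∞` as `ε → 0⁺`. -/
theorem strip_modulus_tendsto_top (I J : Set ℂ) (hIbd : I ⊆ stripBdry) (hJbd : J ⊆ stripBdry)
    (a b c d : ℝ) (hI : leftEnd a b ⊆ I) (hJ : rightEnd c d ⊆ J) :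
    Filter.Tendsto (fun ε : ℝ => modulus (stripFam ε I J))
      (nhdsWithin 0 (Set.Ioi 0)) (nhds ⊤) :=
  strip_modulus_tendsto_top_general I J a b c d hI hJ

end
end

section
/- In the horizontal strip S: if I, J ⊂ ℝ are bounded intervals on the lower boundary line with disjoint closures, then for every ε > 0 one has mod Γᵋ_{I,J} ≤ mod(I,J;ℂ); in particular sup_{ε>0} mod Γᵋ_{I,J} < ∞. -/
open MeasureTheory Set

noncomputable section

/-! ### Auxiliary lemmas -/

/-- FTC-based length estimate with finitely many exceptional points, by induction. -/
lemma ftc_norm_aux (f : ℝ → ℂ) (s : Finset ℝ) :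
    ∀ a b : ℝ, a ≤ b → ContinuousOn f (Set.Icc a b) →
    (∀ t ∈ Set.Ioo a b \ (s : Set ℝ), DifferentiableAt ℝ f t) →
    IntervalIntegrable (deriv f) volume a b →
    ‖f b - f a‖ ≤ ∫ t in a..b, ‖deriv f t‖ := by
  induction s using Finset.induction_on with
  | empty =>
    intro a b hab hcont hdiff hint
    have hftc : ∫ t in a..b, deriv f t = f b - f a := by
      refine intervalIntegral.integral_eq_sub_of_hasDeriv_right_of_le hab hcont
        (fun x hx => ?_) hint
      exact ((hdiff x (by simpa using hx)).hasDerivAt).hasDerivWithinAt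
    rw [← hftc]
    exact intervalIntegral.norm_integral_le_integral_norm hab
  | @insert c s' hc ih =>
    intro a b hab hcont hdiff hint
    by_cases hmem : c ∈ Set.Ioo a b
    · have hac : a ≤ c := le_of_lt hmem.1
      have hcb : c ≤ b := le_of_lt hmem.2
      have hsub1 : Set.uIcc a c ⊆ Set.uIcc a b := by
        rw [Set.uIcc_of_le hac, Set.uIcc_of_le hab]
        exact Set.Icc_subset_Icc le_rfl hcb
      have hsub2 : Set.uIcc c b ⊆ Set.uIcc a b := by
        rw [Set.uIcc_of_le hcb, Set.uIcc_of_le hab]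
        exact Set.Icc_subset_Icc hac le_rfl
      have h1 : ‖f c - f a‖ ≤ ∫ t in a..c, ‖deriv f t‖ := by
        refine ih a c hac (hcont.mono (Set.Icc_subset_Icc le_rfl hcb)) (fun t ht => ?_)
          (hint.mono_set hsub1)
        refine hdiff t ⟨⟨ht.1.1, lt_trans ht.1.2 hmem.2⟩, ?_⟩
        simp only [Finset.coe_insert, Set.mem_insert_iff, not_or]
        exact ⟨ne_of_lt ht.1.2, ht.2⟩
      have h2 : ‖f b - f c‖ ≤ ∫ t in c..b, ‖deriv f t‖ := by
        refine ih c b hcb (hcont.mono (Set.Icc_subset_Icc hac le_rfl)) (fun t ht => ?_)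
          (hint.mono_set hsub2)
        refine hdiff t ⟨⟨lt_trans hmem.1 ht.1.1, ht.1.2⟩, ?_⟩
        simp only [Finset.coe_insert, Set.mem_insert_iff, not_or]
        exact ⟨ne_of_gt ht.1.1, ht.2⟩
      have hsum : (∫ t in a..c, ‖deriv f t‖) + ∫ t in c..b, ‖deriv f t‖
          = ∫ t in a..b, ‖deriv f t‖ :=
        intervalIntegral.integral_add_adjacent_intervals
          (hint.norm.mono_set hsub1) (hint.norm.mono_set hsub2)
      calc ‖f b - f a‖ = ‖(f c - f a) + (f b - f c)‖ := by ring_nf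
        _ ≤ ‖f c - f a‖ + ‖f b - f c‖ := norm_add_le _ _
        _ ≤ (∫ t in a..c, ‖deriv f t‖) + ∫ t in c..b, ‖deriv f t‖ := add_le_add h1 h2
        _ = ∫ t in a..b, ‖deriv f t‖ := hsum
    · refine ih a b hab hcont (fun t ht => ?_) hint
      refine hdiff t ⟨ht.1, ?_⟩
      simp only [Finset.coe_insert, Set.mem_insert_iff, not_or]
      exact ⟨fun h => hmem (h ▸ ht.1), ht.2⟩

/-- The chord length is at most the arc length, in `ENNReal` form. -/
lemma chord_le_lintegral (γ : PCurve) {a b : ℝ} (ha : 0 ≤ a) (hab : a ≤ b) (hb : b ≤ 1) :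
    ENNReal.ofReal ‖γ.toFun b - γ.toFun a‖ ≤
      ∫⁻ t in Set.Ioo a b, ENNReal.ofReal ‖deriv γ.toFun t‖ := by
  set L := ∫⁻ t in Set.Ioo a b, ENNReal.ofReal ‖deriv γ.toFun t‖ with hL
  rcases eq_top_or_lt_top L with h | h
  · rw [h]; exact le_top
  · have hmeas : Measurable (deriv γ.toFun) := measurable_deriv _
    have hInt : IntegrableOn (deriv γ.toFun) (Set.Ioo a b) := by
      refine ⟨hmeas.aestronglyMeasurable, ?_⟩
      rw [hasFiniteIntegral_iff_norm]
      simpa [hL] using h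
    have hii : IntervalIntegrable (deriv γ.toFun) volume a b := by
      rw [intervalIntegrable_iff_integrableOn_Ioc_of_le hab]
      exact (integrableOn_Ioc_iff_integrableOn_Ioo (by simp)).2 hInt
    have key : ‖γ.toFun b - γ.toFun a‖ ≤ ∫ t in a..b, ‖deriv γ.toFun t‖ := by
      refine ftc_norm_aux γ.toFun γ.exceptional a b hab
        (γ.continuousOn.mono (Set.Icc_subset_Icc ha hb)) (fun t ht => ?_) hii
      exact γ.differentiableAt t
        ⟨⟨ha.trans ht.1.1.le, ht.1.2.le.trans hb⟩, ht.2⟩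
    have heq : ENNReal.ofReal (∫ t in Set.Ioo a b, ‖deriv γ.toFun t‖) = L :=
      ofReal_integral_eq_lintegral_ofReal hInt.norm
        (Filter.Eventually.of_forall fun t => norm_nonneg _)
    calc ENNReal.ofReal ‖γ.toFun b - γ.toFun a‖
        ≤ ENNReal.ofReal (∫ t in a..b, ‖deriv γ.toFun t‖) := ENNReal.ofReal_le_ofReal key
      _ = L := by
          rw [intervalIntegral.integral_of_le hab, integral_Ioc_eq_integral_Ioo]
          exact heq

/-- Crossing estimate: a curve joining a set to points at distance `≥ d` from it picks up
`ρ`-length at least `1` for `ρ = d⁻¹ · 1_{thickening d A}`. -/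
lemma crossing_estimate (γ : PCurve) (A : Set ℂ) (hA : A.Nonempty) {d : ℝ} (hd : 0 < d)
    (hends : (Metric.infDist (γ.toFun 0) A = 0 ∧ d ≤ Metric.infDist (γ.toFun 1) A) ∨
             (Metric.infDist (γ.toFun 1) A = 0 ∧ d ≤ Metric.infDist (γ.toFun 0) A)) :
    1 ≤ curveLIntegral ((Metric.thickening d A).indicator fun _ => ENNReal.ofReal d⁻¹) γ := by
  set f : ℝ → ℝ := fun t => Metric.infDist (γ.toFun t) A with hf
  have hfc : ContinuousOn f (Set.Icc 0 1) :=
    (Metric.continuous_infDist_pt A).comp_continuousOn γ.continuousOn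
  set T : Set ℝ := Set.Icc 0 1 ∩ f ⁻¹' Set.Ici d with hT
  have hTc : IsClosed T := hfc.preimage_isClosed_of_isClosed isClosed_Icc isClosed_Ici
  have tail : ∀ u v : ℝ, 0 ≤ u → u ≤ v → v ≤ 1 →
      (∀ t ∈ Set.Ioo u v, γ.toFun t ∈ Metric.thickening d A) →
      d ≤ ‖γ.toFun v - γ.toFun u‖ →
      1 ≤ curveLIntegral ((Metric.thickening d A).indicator fun _ => ENNReal.ofReal d⁻¹) γ := by
    intro u v hu huv hv hth hdist
    have hmono : ∫⁻ t in Set.Ioo u v,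
        ((Metric.thickening d A).indicator fun _ => ENNReal.ofReal d⁻¹) (γ.toFun t) *
          ENNReal.ofReal ‖deriv γ.toFun t‖ ≤
        curveLIntegral ((Metric.thickening d A).indicator fun _ => ENNReal.ofReal d⁻¹) γ :=
      lintegral_mono_set (Set.Ioo_subset_Ioo hu hv)
    refine le_trans ?_ hmono
    calc (1 : ENNReal) = ENNReal.ofReal d⁻¹ * ENNReal.ofReal d := by
          rw [← ENNReal.ofReal_mul (le_of_lt (inv_pos.2 hd)), inv_mul_cancel₀ (ne_of_gt hd),
            ENNReal.ofReal_one]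
      _ ≤ ENNReal.ofReal d⁻¹ * ENNReal.ofReal ‖γ.toFun v - γ.toFun u‖ :=
          mul_le_mul_right (ENNReal.ofReal_le_ofReal hdist) _
      _ ≤ ENNReal.ofReal d⁻¹ * ∫⁻ t in Set.Ioo u v, ENNReal.ofReal ‖deriv γ.toFun t‖ :=
          mul_le_mul_right (chord_le_lintegral γ hu huv hv) _
      _ = ∫⁻ t in Set.Ioo u v, ENNReal.ofReal d⁻¹ * ENNReal.ofReal ‖deriv γ.toFun t‖ :=
          (lintegral_const_mul' _ _ ENNReal.ofReal_ne_top).symm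
      _ = ∫⁻ t in Set.Ioo u v,
            ((Metric.thickening d A).indicator fun _ => ENNReal.ofReal d⁻¹) (γ.toFun t) *
              ENNReal.ofReal ‖deriv γ.toFun t‖ := by
          refine setLIntegral_congr_fun measurableSet_Ioo
            (fun t ht => ?_)
          rw [Set.indicator_of_mem (hth t ht)]
  rcases hends with ⟨h0, h1⟩ | ⟨h1, h0⟩
  · -- starts on A, ends at distance ≥ d
    have hT1 : (1 : ℝ) ∈ T := ⟨⟨zero_le_one, le_rfl⟩, h1⟩
    have hbdd : BddBelow T := ⟨0, fun x hx => hx.1.1⟩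
    set τ := sInf T with hτ
    have hτT : τ ∈ T := hTc.csInf_mem ⟨1, hT1⟩ hbdd
    have hτ1 : τ ≤ 1 := csInf_le hbdd hT1
    have hτ0 : 0 ≤ τ := hτT.1.1
    refine tail 0 τ le_rfl hτ0 hτ1 (fun t ht => ?_) ?_
    · have htT : t ∉ T := fun htT => absurd (csInf_le hbdd htT) (not_le.2 ht.2)
      have hlt : f t < d := by
        by_contra hge
        exact htT ⟨⟨le_of_lt ht.1, (le_of_lt ht.2).trans hτ1⟩, not_lt.1 hge⟩
      exact (Metric.mem_thickening_iff_infDist_lt hA).2 hlt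
    · have h2 : f τ ≤ f 0 + dist (γ.toFun τ) (γ.toFun 0) := Metric.infDist_le_infDist_add_dist
      have h3 : d ≤ f τ := hτT.2
      simp only [hf] at h2 h3
      rw [h0, zero_add, dist_eq_norm] at h2
      linarith
  · -- starts at distance ≥ d, ends on A
    have hT0 : (0 : ℝ) ∈ T := ⟨⟨le_rfl, zero_le_one⟩, h0⟩
    have hbdd : BddAbove T := ⟨1, fun x hx => hx.1.2⟩
    set τ := sSup T with hτ
    have hτT : τ ∈ T := hTc.csSup_mem ⟨0, hT0⟩ hbdd
    have hτ1 : τ ≤ 1 := hτT.1.2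
    have hτ0 : 0 ≤ τ := le_csSup hbdd hT0
    refine tail τ 1 hτ0 hτ1 le_rfl (fun t ht => ?_) ?_
    · have htT : t ∉ T := fun htT => absurd (le_csSup hbdd htT) (not_le.2 ht.1)
      have hlt : f t < d := by
        by_contra hge
        exact htT ⟨⟨hτ0.trans (le_of_lt ht.1), le_of_lt ht.2⟩, not_lt.1 hge⟩
      exact (Metric.mem_thickening_iff_infDist_lt hA).2 hlt
    · have h2 : f τ ≤ f 1 + dist (γ.toFun τ) (γ.toFun 1) := Metric.infDist_le_infDist_add_dist
      have h3 : d ≤ f τ := hτT.2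
      simp only [hf] at h2 h3
      rw [h1, zero_add, dist_eq_norm, norm_sub_rev] at h2
      linarith

/-- The modulus is monotone with respect to inclusion of curve families. -/
lemma modulus_mono {Γ Γ' : Set PCurve} (h : Γ ⊆ Γ') : modulus Γ ≤ modulus Γ' :=
  le_iInf₂ fun ρ hρ => iInf₂_le ρ ⟨hρ.1, fun γ hγ => hρ.2 γ (h hγ)⟩

/-- The modulus of the curves joining a bounded set to a set at positive distance is finite. -/
lemma modulus_bound (E F : Set ℂ) (hEb : Bornology.IsBounded E)
    (hdisj : closure E ∩ closure F = ∅) :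
    ∃ M : ℝ, modulus (connecting E F Set.univ) ≤ ENNReal.ofReal M := by
  by_cases hne : E.Nonempty ∧ F.Nonempty
  · obtain ⟨hEne, hFne⟩ := hne
    have hAc : IsCompact (closure E) := hEb.isCompact_closure
    have hAne : (closure E).Nonempty := hEne.closure
    have hBne : (closure F).Nonempty := hFne.closure
    obtain ⟨a₀, ha₀, hmin'⟩ := hAc.exists_isMinOn hAne
      (Metric.continuous_infDist_pt (closure F)).continuousOn
    have hmin : ∀ a ∈ closure E, Metric.infDist a₀ (closure F) ≤ Metric.infDist a (closure F) :=
      fun a ha => hmin' ha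
    set d := Metric.infDist a₀ (closure F) with hd'
    have hd : 0 < d := by
      refine (isClosed_closure.notMem_iff_infDist_pos hBne).1 ?_
      intro hmem
      exact absurd hdisj (by
        apply Set.Nonempty.ne_empty
        exact ⟨a₀, ha₀, hmem⟩)
    have hFd : ∀ x ∈ F, d ≤ Metric.infDist x (closure E) := by
      intro x hx
      by_contra hlt
      rw [not_le] at hlt
      obtain ⟨a, haA, hdist⟩ := (Metric.infDist_lt_iff hAne).1 hlt
      have h1 : d ≤ dist a x :=
        le_trans (hmin a haA) (Metric.infDist_le_dist_of_mem (subset_closure hx))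
      rw [dist_comm] at h1
      linarith
    set ρ : ℂ → ENNReal :=
      (Metric.thickening d (closure E)).indicator (fun _ => ENNReal.ofReal d⁻¹) with hρ
    have hadm : IsAdmissible ρ (connecting E F Set.univ) := by
      refine ⟨measurable_const.indicator Metric.isOpen_thickening.measurableSet,
        fun γ hγ => ?_⟩
      rcases hγ.2 with ⟨h0, h1⟩ | ⟨h0, h1⟩
      · exact crossing_estimate γ (closure E) hAne hd
          (Or.inl ⟨Metric.infDist_zero_of_mem (subset_closure h0), hFd _ h1⟩)
      · exact crossing_estimate γ (closure E) hAne hd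
          (Or.inr ⟨Metric.infDist_zero_of_mem (subset_closure h1), hFd _ h0⟩)
    have hvol : volume (Metric.thickening d (closure E)) < ⊤ :=
      (hEb.closure.thickening).measure_lt_top
    have henergy : ∫⁻ z, ρ z ^ 2 =
        ENNReal.ofReal d⁻¹ ^ 2 * volume (Metric.thickening d (closure E)) := by
      have hpt : ∀ z, ρ z ^ 2 =
          (Metric.thickening d (closure E)).indicator
            (fun _ => ENNReal.ofReal d⁻¹ ^ 2) z := by
        intro z
        rw [hρ]
        by_cases hz : z ∈ Metric.thickening d (closure E)
        · rw [Set.indicator_of_mem hz, Set.indicator_of_mem hz]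
        · rw [Set.indicator_of_notMem hz, Set.indicator_of_notMem hz]
          simp
      simp_rw [hpt]
      rw [lintegral_indicator Metric.isOpen_thickening.measurableSet, setLIntegral_const]
    have hne_top : ENNReal.ofReal d⁻¹ ^ 2 * volume (Metric.thickening d (closure E)) ≠ ⊤ :=
      ENNReal.mul_ne_top (ENNReal.pow_ne_top ENNReal.ofReal_ne_top) hvol.ne
    refine ⟨(ENNReal.ofReal d⁻¹ ^ 2 * volume (Metric.thickening d (closure E))).toReal, ?_⟩
    rw [ENNReal.ofReal_toReal hne_top, ← henergy]
    exact iInf₂_le ρ hadm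
  · refine ⟨0, ?_⟩
    have hΓ : connecting E F Set.univ = ∅ := by
      ext γ
      simp only [connecting, Set.mem_setOf_eq, Set.mem_empty_iff_false, iff_false]
      rintro ⟨-, ⟨h0, h1⟩ | ⟨h0, h1⟩⟩
      · exact hne ⟨⟨_, h0⟩, ⟨_, h1⟩⟩
      · exact hne ⟨⟨_, h1⟩, ⟨_, h0⟩⟩
    have hadm : IsAdmissible (fun _ => 0) (connecting E F Set.univ) :=
      ⟨measurable_const, fun γ hγ => absurd hγ (by rw [hΓ]; exact Set.notMem_empty γ)⟩
    calc modulus (connecting E F Set.univ) ≤ ∫⁻ _ : ℂ, (0 : ENNReal) ^ 2 := iInf₂_le (fun _ => (0 : ENNReal)) hadm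
      _ = 0 := by simp
      _ ≤ ENNReal.ofReal 0 := by simp

/-- The modulus of connecting families in the plane is invariant (≤ direction) under scaling. -/
lemma modulus_scale {c : ℝ} (hc : 0 < c) (E F : Set ℂ) :
    modulus (connecting ((fun z => (c : ℂ) * z) '' E) ((fun z => (c : ℂ) * z) '' F) Set.univ) ≤
      modulus (connecting E F Set.univ) := by
  refine le_iInf₂ fun ρ hρ => ?_
  set ρc : ℂ → ENNReal := fun z => ENNReal.ofReal c⁻¹ * ρ (c⁻¹ • z) with hρc
  have hmeasc : Measurable ρc := (hρ.1.comp (measurable_const_smul c⁻¹)).const_mul _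
  have hinv : ∀ (G : Set ℂ) (z : ℂ), z ∈ (fun z => (c : ℂ) * z) '' G → c⁻¹ • z ∈ G := by
    rintro G z ⟨x, hx, rfl⟩
    have : c⁻¹ • ((c : ℂ) * x) = x := by
      rw [Complex.real_smul, Complex.ofReal_inv,
        inv_mul_cancel_left₀ (Complex.ofReal_ne_zero.2 (ne_of_gt hc))]
    rwa [this]
  have hadm : IsAdmissible ρc
      (connecting ((fun z => (c : ℂ) * z) '' E) ((fun z => (c : ℂ) * z) '' F) Set.univ) := by
    refine ⟨hmeasc, fun γ hγ => ?_⟩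
    set σfun : ℝ → ℂ := fun t => c⁻¹ • γ.toFun t with hσfun
    have hder : ∀ t ∈ Set.Icc (0 : ℝ) 1 \ (γ.exceptional : Set ℝ),
        deriv σfun t = c⁻¹ • deriv γ.toFun t :=
      fun t ht => by simp only [hσfun]; exact deriv_const_smul c⁻¹ (γ.differentiableAt t ht)
    set σ : PCurve := ⟨σfun, γ.continuousOn.const_smul c⁻¹, γ.exceptional,
      fun t ht => (γ.differentiableAt t ht).const_smul c⁻¹,
      (γ.derivContinuousOn.const_smul c⁻¹).congr hder⟩ with hσ
    have hσmem : σ ∈ connecting E F Set.univ := by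
      refine ⟨fun t _ => Set.mem_univ _, ?_⟩
      rcases hγ.2 with ⟨h0, h1⟩ | ⟨h0, h1⟩
      · exact Or.inl ⟨hinv E _ h0, hinv F _ h1⟩
      · exact Or.inr ⟨hinv F _ h0, hinv E _ h1⟩
    have hexc : ∀ᵐ t ∂(volume : Measure ℝ), t ∉ (γ.exceptional : Set ℝ) :=
      measure_eq_zero_iff_ae_notMem.1 (γ.exceptional.finite_toSet.measure_zero _)
    have hae : ∀ᵐ t ∂(volume.restrict (Set.Ioo (0 : ℝ) 1)),
        ρc (γ.toFun t) * ENNReal.ofReal ‖deriv γ.toFun t‖ =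
          ρ (σfun t) * ENNReal.ofReal ‖deriv σfun t‖ := by
      filter_upwards [ae_restrict_mem measurableSet_Ioo, ae_restrict_of_ae hexc] with t ht hts
      have htIcc : t ∈ Set.Icc (0 : ℝ) 1 \ (γ.exceptional : Set ℝ) :=
        ⟨⟨le_of_lt ht.1, le_of_lt ht.2⟩, hts⟩
      rw [hder t htIcc, norm_smul, Real.norm_eq_abs, abs_of_pos (inv_pos.2 hc),
        ENNReal.ofReal_mul (le_of_lt (inv_pos.2 hc))]
      simp only [hρc, hσfun]
      ring
    have hci : curveLIntegral ρc γ = curveLIntegral ρ σ := by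
      rw [curveLIntegral, curveLIntegral]
      exact lintegral_congr_ae hae
    rw [hci]
    exact hρ.2 σ hσmem
  refine le_trans (iInf₂_le ρc hadm) (le_of_eq ?_)
  have hc2 : (c : ℝ)⁻¹ ≠ 0 := inv_ne_zero (ne_of_gt hc)
  have hmap : Measure.map (fun z : ℂ => c⁻¹ • z) volume =
      ENNReal.ofReal |((c⁻¹) ^ Module.finrank ℝ ℂ)⁻¹| • volume :=
    Measure.map_addHaar_smul volume hc2
  have hg : Measurable fun w : ℂ => ρ w ^ 2 := hρ.1.pow_const 2
  calc ∫⁻ z, ρc z ^ 2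
      = ∫⁻ z, ENNReal.ofReal c⁻¹ ^ 2 * ρ (c⁻¹ • z) ^ 2 := by simp_rw [hρc, mul_pow]
    _ = ENNReal.ofReal c⁻¹ ^ 2 * ∫⁻ z, (fun w => ρ w ^ 2) (c⁻¹ • z) :=
        lintegral_const_mul' _ _ (ENNReal.pow_ne_top ENNReal.ofReal_ne_top)
    _ = ENNReal.ofReal c⁻¹ ^ 2 * ∫⁻ w, ρ w ^ 2 ∂(Measure.map (fun z : ℂ => c⁻¹ • z) volume) := by
        rw [lintegral_map hg (measurable_const_smul _)]
    _ = ENNReal.ofReal c⁻¹ ^ 2 * (ENNReal.ofReal |((c⁻¹) ^ Module.finrank ℝ ℂ)⁻¹| *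
          ∫⁻ w, ρ w ^ 2) := by
        rw [hmap, lintegral_smul_measure, smul_eq_mul]
    _ = ∫⁻ z, ρ z ^ 2 := by
        rw [Complex.finrank_real_complex]
        rw [← mul_assoc, ← ENNReal.ofReal_pow (le_of_lt (inv_pos.2 hc)),
          ← ENNReal.ofReal_mul (by positivity)]
        have : (c⁻¹) ^ 2 * |((c⁻¹) ^ 2)⁻¹| = 1 := by
          rw [abs_of_pos (by positivity)]
          field_simp
        rw [this, ENNReal.ofReal_one, one_mul]

/-- `Heps ε` agrees with multiplication by `ε` on the real axis. -/
lemma Heps_image_real (ε : ℝ) (I : Set ℝ) :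
    Heps ε '' ((fun x : ℝ => (x : ℂ)) '' I) =
      (fun z => (ε : ℂ) * z) '' ((fun x : ℝ => (x : ℂ)) '' I) := by
  refine Set.image_congr fun z hz => ?_
  obtain ⟨x, -, rfl⟩ := hz
  apply Complex.ext <;>
    simp [Heps, Complex.mul_re, Complex.mul_im]

/-- Main theorem. -/
theorem strip_modulus_bounded_intervals (I J : Set ℝ)
    (hIconn : I.OrdConnected) (hJconn : J.OrdConnected)
    (hIbd : Bornology.IsBounded I) (hJbd : Bornology.IsBounded J)
    (hdisj : closure I ∩ closure J = ∅) :
    (∀ ε : ℝ, 0 < ε →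
      modulus (stripFam ε ((fun x : ℝ => (x : ℂ)) '' I) ((fun x : ℝ => (x : ℂ)) '' J)) ≤
        modulus (connecting ((fun x : ℝ => (x : ℂ)) '' I) ((fun x : ℝ => (x : ℂ)) '' J)
          Set.univ)) ∧
    ∃ M : ℝ, ∀ ε : ℝ, 0 < ε →
      modulus (stripFam ε ((fun x : ℝ => (x : ℂ)) '' I) ((fun x : ℝ => (x : ℂ)) '' J)) ≤
        ENNReal.ofReal M := by
  have hpart1 : ∀ ε : ℝ, 0 < ε →
      modulus (stripFam ε ((fun x : ℝ => (x : ℂ)) '' I) ((fun x : ℝ => (x : ℂ)) '' J)) ≤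
        modulus (connecting ((fun x : ℝ => (x : ℂ)) '' I) ((fun x : ℝ => (x : ℂ)) '' J)
          Set.univ) := by
    intro ε hε
    have hsub : stripFam ε ((fun x : ℝ => (x : ℂ)) '' I) ((fun x : ℝ => (x : ℂ)) '' J) ⊆
        connecting (Heps ε '' ((fun x : ℝ => (x : ℂ)) '' I))
          (Heps ε '' ((fun x : ℝ => (x : ℂ)) '' J)) Set.univ := by
      rintro γ ⟨-, hb⟩
      exact ⟨fun t _ => Set.mem_univ _, hb⟩
    calc modulus (stripFam ε ((fun x : ℝ => (x : ℂ)) '' I) ((fun x : ℝ => (x : ℂ)) '' J))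
        ≤ modulus (connecting (Heps ε '' ((fun x : ℝ => (x : ℂ)) '' I))
            (Heps ε '' ((fun x : ℝ => (x : ℂ)) '' J)) Set.univ) := modulus_mono hsub
      _ = modulus (connecting ((fun z => (ε : ℂ) * z) '' ((fun x : ℝ => (x : ℂ)) '' I))
            ((fun z => (ε : ℂ) * z) '' ((fun x : ℝ => (x : ℂ)) '' J)) Set.univ) := by
          rw [Heps_image_real, Heps_image_real]
      _ ≤ modulus (connecting ((fun x : ℝ => (x : ℂ)) '' I) ((fun x : ℝ => (x : ℂ)) '' J)
            Set.univ) := modulus_scale hε _ _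
  refine ⟨hpart1, ?_⟩
  have hEb : Bornology.IsBounded ((fun x : ℝ => (x : ℂ)) '' I) :=
    Complex.isometry_ofReal.lipschitz.isBounded_image hIbd
  have hdisjE : closure ((fun x : ℝ => (x : ℂ)) '' I) ∩
      closure ((fun x : ℝ => (x : ℂ)) '' J) = ∅ := by
    rw [Complex.isometry_ofReal.isClosedEmbedding.closure_image_eq,
      Complex.isometry_ofReal.isClosedEmbedding.closure_image_eq,
      ← Set.image_inter Complex.ofReal_injective, hdisj, Set.image_empty]
  obtain ⟨M, hM⟩ := modulus_bound _ _ hEb hdisjE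
  exact ⟨M, fun ε hε => le_trans (hpart1 ε hε) hM⟩

end
end

section
/- In the horizontal strip S: let I = (a,b) ⊂ ℝ be a bounded interval on the lower boundary line and let J = {x ∈ ℝ : x > c} ∪ {x + i : x > d} with b < c. Then mod Γᵋ_{I,J} is bounded as ε → 0⁺, i.e. there exist M < ∞ and ε₀ > 0 such that mod Γᵋ_{I,J} ≤ M for all 0 < ε < ε₀. -/
open MeasureTheory Set

noncomputable section

/-!
Take `r = ε (c - b)` and the density `ρ = 1/r` on the `r`-neighbourhood `N` of `H_ε(I)`.
Once `r ≤ 1`, `H_ε(J)` lies outside `N` (its lower part is at horizontal distance `≥ r`, its upper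
part at height `1`), so every curve of the family runs from `H_ε(I)` to `∂N` inside `N` and has
length at least `r` there, which makes `ρ` admissible. Since `N` lies in a rectangle of width
`ε (b - a) + 2r` and height `2r`, the energy of `ρ` is at most `2 (b - a + 2(c - b)) / (c - b)`,
independently of `ε`.
-/

open Metric

theorem ofReal_norm_sub_le_lintegral_norm_deriv {E : Type*} [NormedAddCommGroup E]
    [NormedSpace ℝ E] [CompleteSpace E] {f : ℝ → E} {s s' : ℝ} {C : Set ℝ} (hss' : s ≤ s')
    (hC : C.Countable) (hf : ContinuousOn f (Icc s s'))
    (hdiff : ∀ t ∈ Ioo s s' \ C, DifferentiableAt ℝ f t) :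
    ENNReal.ofReal ‖f s' - f s‖ ≤ ∫⁻ t in Ioo s s', ENNReal.ofReal ‖deriv f t‖ := by
  by_cases hfin : ∫⁻ t in Ioo s s', ENNReal.ofReal ‖deriv f t‖ = ⊤
  · rw [hfin]
    exact le_top
  have hint : IntegrableOn (deriv f) (Ioo s s') :=
    ⟨(stronglyMeasurable_deriv f).aestronglyMeasurable,
      hasFiniteIntegral_iff_norm _ |>.2 (lt_top_iff_ne_top.2 hfin)⟩
  have hftc := integral_eq_of_hasDerivAt_off_countable_of_le f (deriv f) hss' hC hf
    (fun t ht => (hdiff t ht).hasDerivAt)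
    ((intervalIntegrable_iff_integrableOn_Ioo_of_le hss').2 hint)
  rw [← hftc, intervalIntegral.integral_of_le hss', integral_Ioc_eq_integral_Ioo]
  simpa only [ofReal_norm] using enorm_integral_le_lintegral_enorm (deriv f)

theorem PCurve.ofReal_norm_sub_le_lintegral (γ : PCurve) {s s' : ℝ} (h0 : 0 ≤ s) (hss' : s ≤ s')
    (h1 : s' ≤ 1) :
    ENNReal.ofReal ‖γ.toFun s' - γ.toFun s‖ ≤
      ∫⁻ t in Ioo s s', ENNReal.ofReal ‖deriv γ.toFun t‖ :=
  ofReal_norm_sub_le_lintegral_norm_deriv hss' γ.exceptional.countable_toSet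
    (γ.continuousOn.mono (Icc_subset_Icc h0 h1))
    fun t ht => γ.differentiableAt t ⟨Ioo_subset_Icc_self (Ioo_subset_Ioo h0 h1 ht.1), ht.2⟩

theorem PCurve.mul_ofReal_norm_sub_le_curveLIntegral_indicator (γ : PCurve) {U : Set ℂ}
    (c : ENNReal) {s s' : ℝ} (h0 : 0 ≤ s) (hss' : s ≤ s') (h1 : s' ≤ 1)
    (hU : ∀ t ∈ Ioo s s', γ.toFun t ∈ U) :
    c * ENNReal.ofReal ‖γ.toFun s' - γ.toFun s‖ ≤ curveLIntegral (U.indicator fun _ => c) γ :=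
  calc c * ENNReal.ofReal ‖γ.toFun s' - γ.toFun s‖
      ≤ c * ∫⁻ t in Ioo s s', ENNReal.ofReal ‖deriv γ.toFun t‖ := by
        gcongr
        exact γ.ofReal_norm_sub_le_lintegral h0 hss' h1
    _ = ∫⁻ t in Ioo s s', U.indicator (fun _ => c) (γ.toFun t) *
          ENNReal.ofReal ‖deriv γ.toFun t‖ := by
        rw [← lintegral_const_mul _ (measurable_deriv _).norm.ennreal_ofReal]
        exact setLIntegral_congr_fun measurableSet_Ioo fun t ht => by
          rw [indicator_of_mem (hU t ht)]
    _ ≤ curveLIntegral (U.indicator fun _ => c) γ := lintegral_mono_set (Ioo_subset_Ioo h0 h1)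

theorem exists_first_exit {X : Type*} [TopologicalSpace X] {f : ℝ → X} {U : Set X} {a b : ℝ}
    (hab : a ≤ b) (hf : ContinuousOn f (Icc a b)) (hU : IsOpen U) (hb : f b ∉ U) :
    ∃ s ∈ Icc a b, f s ∉ U ∧ ∀ t ∈ Ico a s, f t ∈ U := by
  set T := Icc a b ∩ f ⁻¹' Uᶜ
  have hbdd : BddBelow T := ⟨a, fun t ht => ht.1.1⟩
  obtain ⟨hs, hsU⟩ := (hf.preimage_isClosed_of_isClosed isClosed_Icc hU.isClosed_compl).csInf_mem
    ⟨b, right_mem_Icc.2 hab, hb⟩ hbdd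
  refine ⟨sInf T, hs, hsU, fun t ht => ?_⟩
  by_contra htU
  exact (csInf_le hbdd ⟨⟨ht.1, ht.2.le.trans hs.2⟩, htU⟩).not_gt ht.2

theorem exists_last_exit {X : Type*} [TopologicalSpace X] {f : ℝ → X} {U : Set X} {a b : ℝ}
    (hab : a ≤ b) (hf : ContinuousOn f (Icc a b)) (hU : IsOpen U) (ha : f a ∉ U) :
    ∃ s ∈ Icc a b, f s ∉ U ∧ ∀ t ∈ Ioc s b, f t ∈ U := by
  set T := Icc a b ∩ f ⁻¹' Uᶜ
  have hbdd : BddAbove T := ⟨b, fun t ht => ht.1.2⟩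
  obtain ⟨hs, hsU⟩ := (hf.preimage_isClosed_of_isClosed isClosed_Icc hU.isClosed_compl).csSup_mem
    ⟨a, left_mem_Icc.2 hab, ha⟩ hbdd
  refine ⟨sSup T, hs, hsU, fun t ht => ?_⟩
  by_contra htU
  exact (le_csSup hbdd ⟨⟨hs.1.trans ht.1.le, ht.2⟩, htU⟩).not_gt ht.1

theorem one_le_inv_ofReal_mul_ofReal_norm_sub {E : Set ℂ} {r : ℝ} (hr : 0 < r) {x y : ℂ}
    (hx : x ∈ E) (hy : y ∉ thickening r E) :
    1 ≤ (ENNReal.ofReal r)⁻¹ * ENNReal.ofReal ‖y - x‖ := by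
  have hrx : r ≤ ‖y - x‖ := by
    rw [← dist_eq_norm]
    by_contra! h
    exact hy (mem_thickening_iff.2 ⟨x, hx, h⟩)
  calc (1 : ENNReal) = (ENNReal.ofReal r)⁻¹ * ENNReal.ofReal r :=
        (ENNReal.inv_mul_cancel (ENNReal.ofReal_pos.2 hr).ne' ENNReal.ofReal_ne_top).symm
    _ ≤ (ENNReal.ofReal r)⁻¹ * ENNReal.ofReal ‖y - x‖ := by gcongr

theorem PCurve.one_le_curveLIntegral_indicator_thickening (γ : PCurve) {E : Set ℂ} {r : ℝ}
    (hr : 0 < r)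
    (hγ : γ.toFun 0 ∈ E ∧ γ.toFun 1 ∉ thickening r E ∨
      γ.toFun 0 ∉ thickening r E ∧ γ.toFun 1 ∈ E) :
    1 ≤ curveLIntegral ((thickening r E).indicator fun _ => (ENNReal.ofReal r)⁻¹) γ := by
  rcases hγ with ⟨hstart, hend⟩ | ⟨hstart, hend⟩
  · obtain ⟨s, hs, hsU, hin⟩ := exists_first_exit zero_le_one γ.continuousOn isOpen_thickening hend
    exact (one_le_inv_ofReal_mul_ofReal_norm_sub hr hstart hsU).trans
      (γ.mul_ofReal_norm_sub_le_curveLIntegral_indicator _ le_rfl hs.1 hs.2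
        fun t ht => hin t (Ioo_subset_Ico_self ht))
  · obtain ⟨s, hs, hsU, hin⟩ := exists_last_exit zero_le_one γ.continuousOn isOpen_thickening hstart
    have hlen := γ.mul_ofReal_norm_sub_le_curveLIntegral_indicator (ENNReal.ofReal r)⁻¹
      hs.1 hs.2 le_rfl fun t ht => hin t (Ioo_subset_Ioc_self ht)
    rw [norm_sub_rev] at hlen
    exact (one_le_inv_ofReal_mul_ofReal_norm_sub hr hend hsU).trans hlen

theorem modulus_connecting_le_volume_thickening {E F Ω : Set ℂ} {r : ℝ} (hr : 0 < r)
    (hF : Disjoint F (thickening r E)) :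
    modulus (connecting E F Ω) ≤ volume (thickening r E) / ENNReal.ofReal r ^ 2 := by
  set ρ : ℂ → ENNReal := (thickening r E).indicator fun _ => (ENNReal.ofReal r)⁻¹
  have hadm : IsAdmissible ρ (connecting E F Ω) :=
    ⟨measurable_const.indicator isOpen_thickening.measurableSet, fun γ hγ =>
      γ.one_le_curveLIntegral_indicator_thickening hr <|
        hγ.2.imp (And.imp_right fun h => hF.notMem_of_mem_left h)
          (And.imp_left fun h => hF.notMem_of_mem_left h)⟩
  have hρ : (fun z => ρ z ^ 2) = (thickening r E).indicator fun _ => (ENNReal.ofReal r)⁻¹ ^ 2 := by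
    ext z
    by_cases hz : z ∈ thickening r E <;> simp [ρ, hz]
  calc modulus (connecting E F Ω) ≤ ∫⁻ z, ρ z ^ 2 := iInf₂_le ρ hadm
    _ = volume (thickening r E) / ENNReal.ofReal r ^ 2 := by
      rw [hρ, lintegral_indicator_const isOpen_thickening.measurableSet, ← ENNReal.inv_pow,
        ENNReal.div_eq_inv_mul]

theorem thickening_subset_reProdIm {E : Set ℂ} {p q u v r : ℝ} (hE : E ⊆ Icc p q ×ℂ Icc u v) :
    thickening r E ⊆ Ioo (p - r) (q + r) ×ℂ Ioo (u - r) (v + r) := by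
  intro z hz
  obtain ⟨w, hw, hzw⟩ := mem_thickening_iff.1 hz
  obtain ⟨⟨hpw, hwq⟩, huw, hwv⟩ := hE hw
  rw [dist_eq_norm] at hzw
  have hre := abs_le.1 (Complex.abs_re_le_norm (z - w))
  have him := abs_le.1 (Complex.abs_im_le_norm (z - w))
  simp only [Complex.sub_re, Complex.sub_im] at hre him
  exact ⟨⟨by linarith, by linarith⟩, by linarith, by linarith⟩

theorem Complex.volume_reProdIm (s t : Set ℝ) : volume (s ×ℂ t) = volume s * volume t := by
  rw [← Measure.prod_prod, ← Measure.volume_eq_prod,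
    ← volume_preserving_equiv_real_prod.measure_preimage_equiv]
  rfl

theorem Heps_image_subset_reProdIm {ε a b : ℝ} (hε : 0 ≤ ε) :
    Heps ε '' {z : ℂ | z.im = 0 ∧ a < z.re ∧ z.re < b} ⊆ Icc (ε * a) (ε * b) ×ℂ Icc 0 0 := by
  rintro _ ⟨z, ⟨hz0, haz, hzb⟩, rfl⟩
  exact ⟨⟨mul_le_mul_of_nonneg_left haz.le hε, mul_le_mul_of_nonneg_left hzb.le hε⟩,
    hz0.ge, hz0.le⟩

theorem disjoint_Heps_rightEnd_thickening {ε a b c d : ℝ} (hε : 0 < ε) (h1 : ε * (c - b) ≤ 1) :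
    Disjoint (Heps ε '' rightEnd c d)
      (thickening (ε * (c - b)) (Heps ε '' {z : ℂ | z.im = 0 ∧ a < z.re ∧ z.re < b})) := by
  rw [Set.disjoint_left]
  rintro _ ⟨z, hz, rfl⟩ hzE
  obtain ⟨_, ⟨w, ⟨hw0, -, hwb⟩, rfl⟩, hzw⟩ := mem_thickening_iff.1 hzE
  rw [dist_eq_norm] at hzw
  have hre := le_abs_self (Heps ε z - Heps ε w).re |>.trans (Complex.abs_re_le_norm _)
  have him := le_abs_self (Heps ε z - Heps ε w).im |>.trans (Complex.abs_im_le_norm _)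
  simp only [Heps, Complex.sub_re, Complex.sub_im] at hre him hzw
  rcases hz with ⟨-, hcz⟩ | ⟨hz1, -⟩
  · nlinarith
  · rw [hz1, hw0] at him hzw
    linarith

theorem strip_modulus_bounded_interval_rightEnd_general (a b c d : ℝ) (hbc : b < c) :
    ∃ M : ℝ, ∃ ε₀ : ℝ, 0 < ε₀ ∧ ∀ ε : ℝ, 0 < ε → ε < ε₀ →
      modulus (stripFam ε {z : ℂ | z.im = 0 ∧ a < z.re ∧ z.re < b} (rightEnd c d)) ≤
        ENNReal.ofReal M := by
  have hcb : 0 < c - b := sub_pos.2 hbc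
  refine ⟨2 * (b - a + 2 * (c - b)) / (c - b), 1 / (c - b), by positivity, fun ε hε hε₀ => ?_⟩
  have hr : 0 < ε * (c - b) := mul_pos hε hcb
  have hr1 : ε * (c - b) ≤ 1 := ((lt_div_iff₀ hcb).1 hε₀).le
  calc modulus (stripFam ε _ (rightEnd c d))
      ≤ volume (thickening (ε * (c - b)) (Heps ε '' {z : ℂ | z.im = 0 ∧ a < z.re ∧ z.re < b})) /
          ENNReal.ofReal (ε * (c - b)) ^ 2 :=
        modulus_connecting_le_volume_thickening hr (disjoint_Heps_rightEnd_thickening hε hr1)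
    _ ≤ volume (Ioo (ε * a - ε * (c - b)) (ε * b + ε * (c - b)) ×ℂ
          Ioo (0 - ε * (c - b)) (0 + ε * (c - b))) / ENNReal.ofReal (ε * (c - b)) ^ 2 := by
        gcongr
        exact thickening_subset_reProdIm (Heps_image_subset_reProdIm hε.le)
    _ = ENNReal.ofReal (2 * (b - a + 2 * (c - b)) / (c - b)) := by
        rw [Complex.volume_reProdIm, Real.volume_Ioo, Real.volume_Ioo, ← ENNReal.ofReal_pow hr.le,
          ← ENNReal.ofReal_mul' (by linarith), ← ENNReal.ofReal_div_of_pos (by positivity)]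
        congr 1
        field_simp
        ring

/-- If `I = (a,b)` is a bounded interval on the lower boundary line and
`J = {x : x > c} ∪ {x + i : x > d}` with `b < c`, then `mod Γᵋ_{I,J}` is bounded
as `ε → 0⁺`. -/
theorem strip_modulus_bounded_interval_rightEnd (a b c d : ℝ) (hab : a < b) (hbc : b < c) :
    ∃ M : ℝ, ∃ ε₀ : ℝ, 0 < ε₀ ∧ ∀ ε : ℝ, 0 < ε → ε < ε₀ →
      modulus (stripFam ε {z : ℂ | z.im = 0 ∧ a < z.re ∧ z.re < b} (rightEnd c d)) ≤
        ENNReal.ofReal M :=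
  strip_modulus_bounded_interval_rightEnd_general a b c d hbc

end
end

section
/- In Strebel's chimney domain C: mod Γᵋ_{I₀,J₀} → ∞ as ε → 0⁺, where I₀ = {1+iy : y > 1} and J₀ = (1,2). -/
open MeasureTheory Set

noncomputable section

/-- Strebel's chimney domain `C = {Im z < 0} ∪ {|Re z| < 1}`. -/
def chimney : Set ℂ := {z | z.im < 0} ∪ {z | |z.re| < 1}

/-- The vertical shrinking map `T_ε(x + iy) = x + iεy`. -/
def Teps (ε : ℝ) (z : ℂ) : ℂ := ⟨z.re, ε * z.im⟩

/-- `Γᵋ_{I,J} = (T_ε(I), T_ε(J); C)`. -/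
def chimFam (ε : ℝ) (I J : Set ℂ) : Set PCurve :=
  connecting (Teps ε '' I) (Teps ε '' J) chimney

/-- The right boundary component `C₊ = [1,∞) ∪ {1 + iy : y ≥ 0}` of `∂C`. -/
def Cplus : Set ℂ := {z | (z.im = 0 ∧ 1 ≤ z.re) ∨ (z.re = 1 ∧ 0 ≤ z.im)}

/-- The left boundary component `C₋ = (-∞,-1] ∪ {-1 + iy : y ≥ 0}` of `∂C`. -/
def Cminus : Set ℂ := {z | (z.im = 0 ∧ z.re ≤ -1) ∨ (z.re = -1 ∧ 0 ≤ z.im)}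

/-- `I₀ = {1 + iy : y > 1}`. -/
def chimI0 : Set ℂ := {z | z.re = 1 ∧ 1 < z.im}

/-- `J₀ = (1,2) ⊂ ℝ`. -/
def chimJ0 : Set ℂ := {z | z.im = 0 ∧ 1 < z.re ∧ z.re < 2}

/-- Arclength parametrization of `C₊`: `t ≤ 0 ↦ 1 - t ∈ [1,∞)`, `t ≥ 0 ↦ 1 + it`. -/
def gPlus (t : ℝ) : ℂ := if t ≤ 0 then ⟨1 - t, 0⟩ else ⟨1, t⟩

/-- Arclength parametrization of `C₋`: `t ≤ 0 ↦ -1 + t ∈ (-∞,-1]`, `t ≥ 0 ↦ -1 + it`. -/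
def gMinus (t : ℝ) : ℂ := if t ≤ 0 then ⟨-1 + t, 0⟩ else ⟨-1, t⟩

/-- An arc of prime ends of `∂C`: a connected arc of the prime-end circle of the chimney
domain.  It is either an arc inside one boundary component, or an arc passing through the
top end of the chimney, or an arc passing through the bottom end (the point at infinity of
the lower half-plane), or an arc passing through both ends. -/
def IsChimneyArc (A : Set ℂ) : Prop :=
  (∃ s : Set ℝ, s.OrdConnected ∧ A = gPlus '' s) ∨
  (∃ s : Set ℝ, s.OrdConnected ∧ A = gMinus '' s) ∨
  (∃ s t : Set ℝ, s.OrdConnected ∧ t.OrdConnected ∧ ¬BddAbove s ∧ ¬BddAbove t ∧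
    A = gPlus '' s ∪ gMinus '' t) ∨
  (∃ s t : Set ℝ, s.OrdConnected ∧ t.OrdConnected ∧ ¬BddBelow s ∧ ¬BddBelow t ∧
    A = gPlus '' s ∪ gMinus '' t) ∨
  (∃ a b a' b' : ℝ,
    A = gPlus '' (Set.Iio a ∪ Set.Ioi b) ∪ gMinus '' (Set.Iio a' ∪ Set.Ioi b'))

/-- `A` contains the top end of the chimney:
`{1 + iy : y > a} ∪ {-1 + iy : y > a} ⊆ A` for some `a > 0`. -/
def ContainsTopEnd (A : Set ℂ) : Prop :=
  ∃ a : ℝ, 0 < a ∧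
    {z : ℂ | z.re = 1 ∧ a < z.im} ∪ {z : ℂ | z.re = -1 ∧ a < z.im} ⊆ A

/-- `A` contains a two-sided neighborhood of the corner `1`:
`{1 + iy : 0 < y < δ} ∪ (1, 1 + δ) ⊆ A` for some `δ > 0`. -/
def CornerNbhdPlus (A : Set ℂ) : Prop :=
  ∃ δ : ℝ, 0 < δ ∧
    ({z : ℂ | z.re = 1 ∧ 0 < z.im ∧ z.im < δ} ∪
      {z : ℂ | z.im = 0 ∧ 1 < z.re ∧ z.re < 1 + δ}) ⊆ A

/-- `A` contains a two-sided neighborhood of the corner `-1`: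
`(-1 - δ, -1) ∪ {-1 + iy : 0 < y < δ} ⊆ A` for some `δ > 0`. -/
def CornerNbhdMinus (A : Set ℂ) : Prop :=
  ∃ δ : ℝ, 0 < δ ∧
    ({z : ℂ | z.im = 0 ∧ -1 - δ < z.re ∧ z.re < -1} ∪
      {z : ℂ | z.re = -1 ∧ 0 < z.im ∧ z.im < δ}) ⊆ A

/-!
For `ε < r < 1` the three-quarter circle `|z - 1| = r`, run from `1 + ir` through the chimney
and the lower half-plane to `1 + r`, joins `T_ε(I₀)` to `T_ε(J₀)` inside `C`. For admissible `ρ`,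
Cauchy–Schwarz along this arc of length `3πr/2` gives `∫ ρ² ≥ 2 / (3πr)` over it, and integrating
in polar coordinates about `1` over `ε < r < 1` gives `mod Γᵋ_{I₀,J₀} ≥ (2 / 3π) log (1 / ε)`.
-/

open Real

theorem sq_lintegral_le_lintegral_sq {X : Type*} [MeasurableSpace X] {μ : Measure X}
    [IsProbabilityMeasure μ] {f : X → ENNReal} (hf : AEMeasurable f μ) :
    (∫⁻ x, f x ∂μ) ^ 2 ≤ ∫⁻ x, f x ^ 2 ∂μ := by
  have holder := ENNReal.lintegral_mul_le_Lp_mul_Lq μ Real.HolderConjugate.two_two hf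
    aemeasurable_const (g := fun _ => 1)
  simp only [Pi.mul_apply, mul_one, lintegral_const, measure_univ, ENNReal.rpow_ofNat, one_pow,
    ENNReal.one_rpow] at holder
  calc (∫⁻ x, f x ∂μ) ^ 2 ≤ ((∫⁻ x, f x ^ 2 ∂μ) ^ (1 / 2 : ℝ)) ^ (2 : ℝ) := by
        rw [← ENNReal.rpow_ofNat]; exact ENNReal.rpow_le_rpow holder (by norm_num)
    _ = ∫⁻ x, f x ^ 2 ∂μ := by rw [← ENNReal.rpow_mul]; norm_num

theorem ofReal_log_div_eq_setLIntegral_inv {a b : ℝ} (ha : 0 < a) (hab : a ≤ b) :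
    ENNReal.ofReal (log (b / a)) = ∫⁻ r in Ioo a b, ENNReal.ofReal r⁻¹ := by
  have hint : IntegrableOn (fun r : ℝ => r⁻¹) (Ioo a b) :=
    ((intervalIntegrable_iff_integrableOn_Ioc_of_le hab).mp
      (intervalIntegral.intervalIntegrable_inv (fun r hr => by
        rw [uIcc_of_le hab] at hr; exact (ha.trans_le hr.1).ne') continuousOn_id)).mono_set
      Ioo_subset_Ioc_self
  have hzero : (0 : ℝ) ∉ uIcc a b := by
    rw [uIcc_of_le hab]; exact fun h => ha.not_ge h.1
  have hnonneg : 0 ≤ᵐ[volume.restrict (Ioo a b)] fun r : ℝ => r⁻¹ :=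
    (ae_restrict_iff' measurableSet_Ioo).mpr
      (ae_of_all _ fun r hr => inv_nonneg.2 (ha.trans hr.1).le)
  rw [← ofReal_integral_eq_lintegral_ofReal hint hnonneg, ← integral_Ioc_eq_integral_Ioo,
    ← intervalIntegral.integral_of_le hab, integral_inv hzero]

theorem setLIntegral_Ioo_eq_ofReal_mul_setLIntegral_affine (f : ℝ → ENNReal) (θ₀ : ℝ) {α : ℝ}
    (hα : 0 < α) :
    ∫⁻ θ in Ioo θ₀ (θ₀ + α), f θ = ENNReal.ofReal α * ∫⁻ s in Ioo 0 1, f (θ₀ + α * s) := by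
  have himage : (fun s => α * s + θ₀) '' Ioo 0 1 = Ioo θ₀ (θ₀ + α) := by
    rw [image_affine_Ioo hα]; congr 1 <;> ring
  rw [← himage, lintegral_image_eq_lintegral_abs_deriv_mul (f' := fun _ => α) measurableSet_Ioo
      (fun s _ => by simpa using (((hasDerivAt_id s).const_mul α).add_const θ₀).hasDerivWithinAt)
      (fun s _ t _ h => by simpa [hα.ne'] using h),
    ← lintegral_const_mul' _ _ ENNReal.ofReal_ne_top]
  simp only [abs_of_pos hα, add_comm]

theorem lintegral_eq_lintegral_circleMap {g : ℂ → ENNReal} (hg : Measurable g) (z₀ : ℂ) (θ₀ : ℝ) :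
    ∫⁻ z, g z = ∫⁻ r in Ioi 0, ∫⁻ θ in Ioo θ₀ (θ₀ + 2 * π),
      ENNReal.ofReal r * g (circleMap z₀ r θ) := by
  -- rotating by `e^{i(θ₀ + π)}` moves the window `(θ₀, θ₀ + 2π)` onto the range `(-π, π)` of
  -- the principal polar coordinates
  set c : Circle := Circle.exp (θ₀ + π)
  have hpolar (p : ℝ × ℝ) :
      z₀ + c * Complex.polarCoord.symm p = circleMap z₀ p.1 (p.2 + (θ₀ + π)) := by
    simp only [Complex.polarCoord_symm_apply, circleMap, c, Circle.coe_exp]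
    push_cast
    rw [← Complex.exp_mul_I, mul_left_comm, ← Complex.exp_add]
    ring_nf
  have hshift (F : ℝ → ENNReal) :
      ∫⁻ φ in Ioo (-π) π, F (φ + (θ₀ + π)) = ∫⁻ θ in Ioo θ₀ (θ₀ + 2 * π), F θ := by
    rw [(measurePreserving_add_right volume (θ₀ + π)).setLIntegral_comp_emb
      (Homeomorph.addRight (θ₀ + π)).measurableEmbedding, image_add_const_Ioo,
      show -π + (θ₀ + π) = θ₀ by ring, show π + (θ₀ + π) = θ₀ + 2 * π by ring]
  calc ∫⁻ z, g z = ∫⁻ z, g (z₀ + z) := (lintegral_add_left_eq_self _ z₀).symm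
    _ = ∫⁻ z, g (z₀ + rotation c z) :=
      ((rotation c).measurePreserving.lintegral_comp (hg.comp (measurable_const_add z₀))).symm
    _ = ∫⁻ p in Ioi 0 ×ˢ Ioo (-π) π,
          ENNReal.ofReal p.1 * g (circleMap z₀ p.1 (p.2 + (θ₀ + π))) := by
      rw [← Complex.lintegral_comp_polarCoord_symm]
      simp only [rotation_apply, hpolar, smul_eq_mul]
      rfl
    _ = _ := by
      rw [Measure.volume_eq_prod, ← Measure.prod_restrict, lintegral_prod]
      · exact lintegral_congr fun r => hshift fun θ => ENNReal.ofReal r * g (circleMap z₀ r θ)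
      · refine (measurable_fst.ennreal_ofReal.mul (hg.comp ?_)).aemeasurable
        unfold circleMap; fun_prop

theorem hasDerivAt_circleMap_affine (z₀ : ℂ) (r θ₀ α s : ℝ) :
    HasDerivAt (fun s => circleMap z₀ r (θ₀ + α * s))
      (circleMap 0 r (θ₀ + α * s) * Complex.I * α) s := by
  refine ((hasDerivAt_circleMap z₀ r (θ₀ + α * s)).scomp s
    (((hasDerivAt_id s).const_mul α).const_add θ₀)).congr_deriv ?_
  rw [mul_one, Complex.real_smul, mul_comm]

def circleArc (z₀ : ℂ) (r θ₀ α : ℝ) : PCurve where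
  toFun s := circleMap z₀ r (θ₀ + α * s)
  continuousOn := (by unfold circleMap; fun_prop : Continuous _).continuousOn
  exceptional := ∅
  differentiableAt s _ := (hasDerivAt_circleMap_affine z₀ r θ₀ α s).differentiableAt
  derivContinuousOn := by
    rw [funext fun s => (hasDerivAt_circleMap_affine z₀ r θ₀ α s).deriv]
    exact (by unfold circleMap; fun_prop : Continuous _).continuousOn

theorem curveLIntegral_circleArc (ρ : ℂ → ENNReal) (z₀ : ℂ) (r θ₀ α : ℝ) :
    curveLIntegral ρ (circleArc z₀ r θ₀ α) =
      (∫⁻ s in Ioo 0 1, ρ (circleMap z₀ r (θ₀ + α * s))) * ENNReal.ofReal (|r| * |α|) := by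
  rw [curveLIntegral, ← lintegral_mul_const' _ _ ENNReal.ofReal_ne_top]
  congr! 3 with s
  change ENNReal.ofReal ‖deriv (fun s => circleMap z₀ r (θ₀ + α * s)) s‖ = _
  rw [(hasDerivAt_circleMap_affine z₀ r θ₀ α s).deriv]
  simp

theorem one_le_sq_mul_setLIntegral_sq_of_one_le_curveLIntegral {ρ : ℂ → ENNReal}
    (hρ : Measurable ρ) {z₀ : ℂ} {r θ₀ α : ℝ}
    (h : 1 ≤ curveLIntegral ρ (circleArc z₀ r θ₀ α)) :
    1 ≤ ENNReal.ofReal (|r| * |α|) ^ 2 *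
      ∫⁻ s in Ioo 0 1, ρ (circleMap z₀ r (θ₀ + α * s)) ^ 2 := by
  have : IsProbabilityMeasure (volume.restrict (Ioo (0 : ℝ) 1)) :=
    ⟨by simp [Real.volume_Ioo]⟩
  rw [curveLIntegral_circleArc] at h
  calc 1 ≤ ((∫⁻ s in Ioo 0 1, ρ (circleMap z₀ r (θ₀ + α * s))) *
        ENNReal.ofReal (|r| * |α|)) ^ 2 := one_le_pow₀ h
    _ ≤ _ := by
      rw [mul_pow, mul_comm]
      gcongr
      refine sq_lintegral_le_lintegral_sq (hρ.comp ?_).aemeasurable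
      unfold circleMap; fun_prop

theorem ofReal_log_div_div_le_modulus {Γ : Set PCurve} {z₀ : ℂ} {a b θ₀ α : ℝ} (ha : 0 < a)
    (hab : a ≤ b) (hα : 0 < α) (hα2π : α ≤ 2 * π)
    (hΓ : ∀ r ∈ Ioo a b, circleArc z₀ r θ₀ α ∈ Γ) :
    ENNReal.ofReal (log (b / a) / α) ≤ modulus Γ := by
  refine le_iInf₂ fun ρ hρ => ?_
  have harc (r : ℝ) (hr : r ∈ Ioo a b) :
      ENNReal.ofReal r⁻¹ * ENNReal.ofReal α⁻¹ ≤
        ∫⁻ θ in Ioo θ₀ (θ₀ + α), ENNReal.ofReal r * ρ (circleMap z₀ r θ) ^ 2 := by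
    have hr0 : 0 < r := ha.trans hr.1
    have h := one_le_sq_mul_setLIntegral_sq_of_one_le_curveLIntegral hρ.1 (hρ.2 _ (hΓ r hr))
    rw [abs_of_pos hr0, abs_of_pos hα] at h
    rw [lintegral_const_mul' _ _ ENNReal.ofReal_ne_top,
      setLIntegral_Ioo_eq_ofReal_mul_setLIntegral_affine _ _ hα, ← mul_assoc,
      ← ENNReal.ofReal_mul hr0.le, ← ENNReal.ofReal_mul (inv_nonneg.2 hr0.le), ← mul_inv,
      ENNReal.ofReal_inv_of_pos (by positivity),
      ENNReal.inv_le_iff_le_mul (fun _ => (ENNReal.ofReal_pos.2 (by positivity)).ne')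
        (fun h => absurd h ENNReal.ofReal_ne_top), ← mul_assoc, ← sq]
    exact h
  calc ENNReal.ofReal (log (b / a) / α)
      = (∫⁻ r in Ioo a b, ENNReal.ofReal r⁻¹) * ENNReal.ofReal α⁻¹ := by
        rw [div_eq_mul_inv, ENNReal.ofReal_mul (log_nonneg ((one_le_div ha).2 hab)),
          ofReal_log_div_eq_setLIntegral_inv ha hab]
    _ = ∫⁻ r in Ioo a b, ENNReal.ofReal r⁻¹ * ENNReal.ofReal α⁻¹ :=
        (lintegral_mul_const' _ _ ENNReal.ofReal_ne_top).symm
    _ ≤ ∫⁻ r in Ioo a b, ∫⁻ θ in Ioo θ₀ (θ₀ + α), ENNReal.ofReal r * ρ (circleMap z₀ r θ) ^ 2 :=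
        setLIntegral_mono' measurableSet_Ioo harc
    _ ≤ ∫⁻ r in Ioi 0, ∫⁻ θ in Ioo θ₀ (θ₀ + 2 * π), ENNReal.ofReal r * ρ (circleMap z₀ r θ) ^ 2 :=
        (lintegral_mono fun r => lintegral_mono_set (Ioo_subset_Ioo_right (by linarith))).trans
          (lintegral_mono_set (Ioo_subset_Ioi_self.trans (Ioi_subset_Ioi ha.le)))
    _ = ∫⁻ z, ρ z ^ 2 := (lintegral_eq_lintegral_circleMap (hρ.1.pow_const 2) z₀ θ₀).symm

theorem circleMap_re (z₀ : ℂ) (r θ : ℝ) : (circleMap z₀ r θ).re = z₀.re + r * cos θ := by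
  simp [circleMap, Complex.exp_ofReal_mul_I_re]

theorem circleMap_im (z₀ : ℂ) (r θ : ℝ) : (circleMap z₀ r θ).im = z₀.im + r * sin θ := by
  simp [circleMap, Complex.exp_ofReal_mul_I_im]

theorem circleMap_one_mem_chimney {r θ : ℝ} (hr : r ∈ Ioo 0 1) (hθ : θ ∈ Ioo (π / 2) (2 * π)) :
    circleMap 1 r θ ∈ chimney := by
  rcases lt_or_ge θ (3 * π / 2) with hθ' | hθ'
  · right
    have hcos : cos θ < 0 := cos_neg_of_pi_div_two_lt_of_lt hθ.1 (by linarith)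
    have hcos_ge := neg_one_le_cos θ
    show |(circleMap 1 r θ).re| < 1
    rw [circleMap_re, Complex.one_re, abs_lt]
    constructor <;> nlinarith [hr.1, hr.2]
  · left
    have hsin : sin θ < 0 := by
      rw [← sin_sub_two_pi]
      exact sin_neg_of_neg_of_neg_pi_lt (by linarith [hθ.2]) (by linarith [pi_pos])
    show (circleMap 1 r θ).im < 0
    rw [circleMap_im, Complex.one_im, zero_add]
    exact mul_neg_of_pos_of_neg hr.1 hsin

theorem circleArc_mem_chimFam {ε r : ℝ} (hε : 0 < ε) (hr : r ∈ Ioo ε 1) :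
    circleArc 1 r (π / 2) (3 * π / 2) ∈ chimFam ε chimI0 chimJ0 := by
  have hr0 : 0 < r := hε.trans hr.1
  refine ⟨fun s hs => circleMap_one_mem_chimney ⟨hr0, hr.2⟩ ⟨?_, ?_⟩, Or.inl ⟨?_, ?_⟩⟩
  · nlinarith [pi_pos, hs.1]
  · nlinarith [pi_pos, hs.2]
  · refine ⟨⟨1, r / ε⟩, ⟨rfl, (one_lt_div hε).2 hr.1⟩, Complex.ext ?_ ?_⟩ <;>
      simp [Teps, circleArc, circleMap_re, circleMap_im, mul_div_cancel₀ _ hε.ne']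
  · refine ⟨⟨1 + r, 0⟩, ⟨rfl, by linarith, by linarith [hr.2]⟩, Complex.ext ?_ ?_⟩ <;>
      simp [Teps, circleArc, circleMap_re, circleMap_im, show π / 2 + 3 * π / 2 = 2 * π by ring]

/-- In the chimney domain, `mod Γᵋ_{I₀,J₀} → ∞` as `ε → 0⁺`. -/
theorem chimney_standard_modulus_tendsto_top :
    Filter.Tendsto (fun ε : ℝ => modulus (chimFam ε chimI0 chimJ0))
      (nhdsWithin 0 (Set.Ioi 0)) (nhds ⊤) := by
  have hα : 0 < 3 * π / 2 := by positivity
  have hlog : Filter.Tendsto (fun ε : ℝ => log (1 / ε) / (3 * π / 2))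
      (nhdsWithin 0 (Set.Ioi 0)) Filter.atTop := by
    simp only [one_div, log_inv]
    exact (Filter.tendsto_neg_atBot_atTop.comp tendsto_log_nhdsGT_zero).atTop_div_const hα
  refine tendsto_nhds_top_mono (ENNReal.tendsto_ofReal_atTop.comp hlog) ?_
  filter_upwards [Ioo_mem_nhdsGT one_pos] with ε hε
  exact ofReal_log_div_div_le_modulus hε.1 hε.2.le hα (by linarith [pi_pos])
    fun r hr => circleArc_mem_chimFam hε.1 hr

end
end

section
/- In Strebel's chimney domain C: the family Γ⁰ of curves in C connecting the vertical ray {1+iy : y ≥ 0} to the segment [1,2] that also intersect the imaginary axis {Re z = 0} has finite modulus: mod Γ⁰ < ∞. -/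
open MeasureTheory Set

noncomputable section

/-! The indicator `ρ` of the annulus `2 ≤ |z - 3| ≤ 3` is admissible for `Γ⁰`: a curve of `Γ⁰` has
an endpoint on `[1, 2]`, within distance `2` of `3`, and meets the imaginary axis, at distance at
least `3` from `3`. So it has a subarc inside the annulus whose endpoints are at least `1` apart,
and the length of that subarc is at least `1`. Hence `mod Γ⁰ ≤ ∫ ρ² = area < ∞`. -/

theorem exists_Ioo_mapsTo_Icc_of_le {f : ℝ → ℝ} {a b c d : ℝ} (hab : a ≤ b)
    (hf : ContinuousOn f (Icc a b)) (hfa : f a ≤ c) (hfb : d ≤ f b) (hcd : c < d) :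
    ∃ u v, a ≤ u ∧ u < v ∧ v ≤ b ∧ f u ≤ c ∧ d ≤ f v ∧ MapsTo f (Ioo u v) (Icc c d) := by
  -- `v` is the first time `f` reaches `d`, `u` the last time before `v` that `f` is at most `c`.
  obtain ⟨v, ⟨⟨hav, hvb⟩, hfv⟩, hv_min⟩ : ∃ v, IsLeast (Icc a b ∩ f ⁻¹' Ici d) v :=
    (isCompact_Icc.of_isClosed_subset
      (hf.preimage_isClosed_of_isClosed isClosed_Icc isClosed_Ici) inter_subset_left).exists_isLeast
      ⟨b, ⟨hab, le_rfl⟩, hfb⟩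
  have hfv' : ContinuousOn f (Icc a v) := hf.mono (Icc_subset_Icc le_rfl hvb)
  obtain ⟨u, ⟨⟨hau, huv⟩, hfu⟩, hu_max⟩ : ∃ u, IsGreatest (Icc a v ∩ f ⁻¹' Iic c) u :=
    (isCompact_Icc.of_isClosed_subset
      (hfv'.preimage_isClosed_of_isClosed isClosed_Icc isClosed_Iic)
      inter_subset_left).exists_isGreatest ⟨a, ⟨le_rfl, hav⟩, hfa⟩
  have huv : u < v := huv.lt_of_ne (by rintro rfl; exact (hfu.trans_lt hcd).not_ge hfv)
  refine ⟨u, v, hau, huv, hvb, hfu, hfv, fun t ⟨hut, htv⟩ => ⟨?_, ?_⟩⟩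
  · by_contra! h
    exact hut.not_ge (hu_max ⟨⟨hau.trans hut.le, htv.le⟩, h.le⟩)
  · by_contra! h
    exact htv.not_ge (hv_min ⟨⟨hau.trans hut.le, htv.le.trans hvb⟩, h.le⟩)

theorem exists_Ioo_mapsTo_Icc {f : ℝ → ℝ} {a b c d : ℝ} (hf : ContinuousOn f (uIcc a b))
    (hfa : f a ≤ c) (hfb : d ≤ f b) (hcd : c < d) :
    ∃ u v, u ≤ v ∧ Icc u v ⊆ uIcc a b ∧ d - c ≤ |f v - f u| ∧ MapsTo f (Ioo u v) (Icc c d) := by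
  rcases le_total a b with hab | hba
  · rw [uIcc_of_le hab] at hf ⊢
    obtain ⟨u, v, hau, huv, hvb, hfu, hfv, hmaps⟩ :=
      exists_Ioo_mapsTo_Icc_of_le hab hf hfa hfb hcd
    refine ⟨u, v, huv.le, Icc_subset_Icc hau hvb, ?_, hmaps⟩
    rw [abs_of_nonneg (by linarith)]
    linarith
  · rw [uIcc_of_ge hba] at hf ⊢
    obtain ⟨u, v, hbu, huv, hva, hfu, hfv, hmaps⟩ :=
      exists_Ioo_mapsTo_Icc_of_le (f := -f) hba hf.neg (neg_le_neg hfb) (neg_le_neg hfa)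
        (neg_lt_neg hcd)
    simp only [Pi.neg_apply, neg_le_neg_iff] at hfu hfv
    refine ⟨u, v, huv.le, Icc_subset_Icc hbu hva, ?_, fun t ht => ?_⟩
    · rw [abs_of_nonpos (by linarith)]
      linarith
    · obtain ⟨h1, h2⟩ := hmaps ht
      simp only [Pi.neg_apply, neg_le_neg_iff] at h1 h2
      exact ⟨h2, h1⟩

namespace PCurve

theorem exists_mem_Icc_of_mem_connecting {γ : PCurve} {E F Ω : Set ℂ}
    (hγ : γ ∈ connecting E F Ω) : ∃ a ∈ Icc (0 : ℝ) 1, γ.toFun a ∈ F := by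
  rcases hγ.2 with ⟨-, h1⟩ | ⟨h0, -⟩
  exacts [⟨1, right_mem_Icc.2 zero_le_one, h1⟩, ⟨0, left_mem_Icc.2 zero_le_one, h0⟩]

theorem ofReal_norm_sub_le_lintegral_deriv (γ : PCurve) {u v : ℝ} (hu : 0 ≤ u) (huv : u ≤ v)
    (hv : v ≤ 1) :
    ENNReal.ofReal ‖γ.toFun v - γ.toFun u‖ ≤
      ∫⁻ t in Ioo u v, ENNReal.ofReal ‖deriv γ.toFun t‖ := by
  by_cases hfin : ∫⁻ t in Ioo u v, ENNReal.ofReal ‖deriv γ.toFun t‖ = ⊤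
  · exact hfin ▸ le_top
  have hint : IntegrableOn (deriv γ.toFun) (Ioo u v) := by
    refine ⟨(measurable_deriv _).aestronglyMeasurable, ?_⟩
    simpa only [HasFiniteIntegral, ← ofReal_norm] using lt_top_iff_ne_top.2 hfin
  have hsub : Icc u v ⊆ Icc 0 1 := Icc_subset_Icc hu hv
  have hftc : ∫ t in u..v, deriv γ.toFun t = γ.toFun v - γ.toFun u :=
    integral_eq_of_hasDerivAt_off_countable_of_le _ _ huv γ.exceptional.countable_toSet
      (γ.continuousOn.mono hsub)
      (fun t ht => (γ.differentiableAt t ⟨hsub (Ioo_subset_Icc_self ht.1), ht.2⟩).hasDerivAt)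
      ((intervalIntegrable_iff_integrableOn_Ioo_of_le huv).2 hint)
  rw [← hftc, intervalIntegral.integral_of_le huv, integral_Ioc_eq_integral_Ioo, ofReal_norm]
  simpa only [ofReal_norm] using enorm_integral_le_lintegral_enorm _

theorem ofReal_norm_sub_le_curveLIntegral_indicator (γ : PCurve) {A : Set ℂ} {u v : ℝ}
    (hu : 0 ≤ u) (huv : u ≤ v) (hv : v ≤ 1) (hA : MapsTo γ.toFun (Ioo u v) A) :
    ENNReal.ofReal ‖γ.toFun v - γ.toFun u‖ ≤ curveLIntegral (A.indicator 1) γ :=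
  calc ENNReal.ofReal ‖γ.toFun v - γ.toFun u‖
      ≤ ∫⁻ t in Ioo u v, ENNReal.ofReal ‖deriv γ.toFun t‖ :=
        γ.ofReal_norm_sub_le_lintegral_deriv hu huv hv
    _ = ∫⁻ t in Ioo u v, A.indicator 1 (γ.toFun t) * ENNReal.ofReal ‖deriv γ.toFun t‖ :=
        setLIntegral_congr_fun measurableSet_Ioo fun t ht => by
          rw [indicator_of_mem (hA ht), Pi.one_apply, one_mul]
    _ ≤ curveLIntegral (A.indicator 1) γ := lintegral_mono_set (Ioo_subset_Ioo hu hv)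

theorem ofReal_sub_le_curveLIntegral_annulus (γ : PCurve) {z₀ : ℂ} {r R a b : ℝ}
    (hrR : r < R) (ha : a ∈ Icc (0 : ℝ) 1) (hb : b ∈ Icc (0 : ℝ) 1)
    (hγa : ‖γ.toFun a - z₀‖ ≤ r) (hγb : R ≤ ‖γ.toFun b - z₀‖) :
    ENNReal.ofReal (R - r) ≤ curveLIntegral (((‖· - z₀‖) ⁻¹' Icc r R).indicator 1) γ := by
  have hab : uIcc a b ⊆ Icc 0 1 := uIcc_subset_Icc ha hb
  obtain ⟨u, v, huv, huv_sub, hdist, hmaps⟩ := exists_Ioo_mapsTo_Icc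
    (f := fun t => ‖γ.toFun t - z₀‖) ((γ.continuousOn.sub continuousOn_const).norm.mono hab)
    hγa hγb hrR
  have huv_01 : Icc u v ⊆ Icc 0 1 := huv_sub.trans hab
  calc ENNReal.ofReal (R - r) ≤ ENNReal.ofReal ‖γ.toFun v - γ.toFun u‖ := by
        gcongr
        refine hdist.trans ?_
        simpa only [sub_sub_sub_cancel_right] using
          abs_norm_sub_norm_le (γ.toFun v - z₀) (γ.toFun u - z₀)
    _ ≤ _ := γ.ofReal_norm_sub_le_curveLIntegral_indicator (huv_01 ⟨le_rfl, huv⟩).1 huv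
        (huv_01 ⟨huv, le_rfl⟩).2 fun _ ht => hmaps ht

end PCurve

theorem modulus_le_volume {Γ : Set PCurve} {A : Set ℂ} (hA : MeasurableSet A)
    (h : ∀ γ ∈ Γ, 1 ≤ curveLIntegral (A.indicator 1) γ) : modulus Γ ≤ volume A :=
  calc modulus Γ ≤ ∫⁻ z, A.indicator 1 z ^ 2 := iInf₂_le _ ⟨measurable_one.indicator hA, h⟩
    _ = volume A := by
      rw [← lintegral_indicator_one hA]
      refine lintegral_congr fun z => ?_
      by_cases hz : z ∈ A <;> simp [hz]

/-- The family `Γ⁰` of curves in `C` connecting the vertical ray `{1 + iy : y ≥ 0}` to the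
segment `[1,2]` which also intersect the imaginary axis `{Re z = 0}` has finite modulus. -/
theorem chimney_crossing_family_finite_modulus :
    modulus
      {γ ∈ connecting {z : ℂ | z.re = 1 ∧ 0 ≤ z.im} {z : ℂ | z.im = 0 ∧ 1 ≤ z.re ∧ z.re ≤ 2}
          chimney | ∃ t ∈ Set.Icc (0:ℝ) 1, (γ.toFun t).re = 0} < ⊤ := by
  set A : Set ℂ := (‖· - 3‖) ⁻¹' Icc 2 3
  have hA : MeasurableSet A := (isClosed_Icc.preimage (by fun_prop)).measurableSet
  have hA_bdd : A ⊆ Metric.closedBall 3 3 := fun z hz => by simpa [dist_eq_norm] using hz.2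
  refine (modulus_le_volume hA ?_).trans_lt
    ((measure_mono hA_bdd).trans_lt measure_closedBall_lt_top)
  rintro γ ⟨hγ, t₀, ht₀, hre⟩
  obtain ⟨a, ha, him, hre₁, hre₂⟩ := PCurve.exists_mem_Icc_of_mem_connecting hγ
  have hnear : ‖γ.toFun a - 3‖ ≤ 2 := by
    have hreal : γ.toFun a - 3 = ((γ.toFun a).re - 3 : ℝ) := Complex.ext (by simp) (by simp [him])
    rw [hreal, Complex.norm_real, Real.norm_eq_abs, abs_le]
    constructor <;> linarith
  have hfar : 3 ≤ ‖γ.toFun t₀ - 3‖ := by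
    simpa [hre] using Complex.abs_re_le_norm (γ.toFun t₀ - 3)
  convert γ.ofReal_sub_le_curveLIntegral_annulus (by norm_num) ha ht₀ hnear hfar
  norm_num

end
end
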